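/- arXiv:2306.11242 — 3 statements merged into one kernel-verified Lean document; each statement's English description precedes it below -/
import Mathlib

section
/- The string polytope of type C_2 for the reduced word (1,2,1,2) and highest weight ρ = ϖ_1 + ϖ_2, defined in ℝ^4 by the inequalities a_1 ≥ 0, 2a_2 ≥ a_3, a_3 ≥ 2a_4, a_4 ≥ 0 together with λ-cone inequalities a_4 ≤ 1, a_3 ≤ 1 + 2a_4, a_2 ≤ 1 + a_3 - 2a_4, a_1 ≤ 1 + 2a_2 - 2a_3 + 2a_4, has (0, 3/2, 3, 1) as a vertex; in particular this polytope is not a lattice polytope. -/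
private lemma seg_le {u v a b c : ℝ} (hu : 0 < u) (hv : 0 < v) (huv : u + v = 1)
    (ha : a ≤ c) (hb : b ≤ c) (h : u * a + v * b = c) : a = c ∧ b = c := by
  have hc : u * c + v * c = c := by rw [← add_mul, huv, one_mul]
  have h1 : u * (c - a) ≥ 0 := mul_nonneg hu.le (sub_nonneg.2 ha)
  have h2 : v * (c - b) ≥ 0 := mul_nonneg hv.le (sub_nonneg.2 hb)
  have key : u * (c - a) + v * (c - b) = 0 := by linear_combination hc - h
  have e1 : u * (c - a) = 0 := by linarith
  have e2 : v * (c - b) = 0 := by linarith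
  rcases mul_eq_zero.1 e1 with h | h
  · exact absurd h hu.ne'
  rcases mul_eq_zero.1 e2 with h' | h'
  · exact absurd h' hv.ne'
  constructor <;> linarith

private lemma seg_ge {u v a b c : ℝ} (hu : 0 < u) (hv : 0 < v) (huv : u + v = 1)
    (ha : c ≤ a) (hb : c ≤ b) (h : u * a + v * b = c) : a = c ∧ b = c := by
  have := seg_le hu hv huv (neg_le_neg ha) (neg_le_neg hb) (by linarith : u * (-a) + v * (-b) = -c)
  constructor <;> linarith [this.1, this.2]

/-- The string polytope of type `C₂` for the reduced word `(1,2,1,2)` and highest weight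
`ρ = ϖ₁ + ϖ₂`, defined by `a₁ ≥ 0`, `2a₂ ≥ a₃ ≥ 2a₄ ≥ 0` together with the `λ`-cone
inequalities `a₄ ≤ 1`, `a₃ ≤ 1 + 2a₄`, `a₂ ≤ 1 + a₃ - 2a₄`, `a₁ ≤ 1 + 2a₂ - 2a₃ + 2a₄`,
has `(0, 3/2, 3, 1)` as a vertex (extreme point); in particular, it is not a lattice
polytope. -/
theorem string_polytope_C2_1212_nonintegral_vertex :
    letI Δ : Set (Fin 4 → ℝ) :=
      {a | 0 ≤ a 0 ∧ a 2 ≤ 2 * a 1 ∧ 2 * a 3 ≤ a 2 ∧ 0 ≤ a 3 ∧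
        a 3 ≤ 1 ∧ a 2 ≤ 1 + 2 * a 3 ∧ a 1 ≤ 1 + a 2 - 2 * a 3 ∧
        a 0 ≤ 1 + 2 * a 1 - 2 * a 2 + 2 * a 3}
    letI p : Fin 4 → ℝ := ![0, 3/2, 3, 1]
    p ∈ Δ.extremePoints ℝ ∧ ¬ (∀ i, ∃ z : ℤ, p i = (z : ℝ)) := by
  refine ⟨⟨?_, ?_⟩, ?_⟩
  · refine ⟨?_, ?_, ?_, ?_, ?_, ?_, ?_, ?_⟩ <;> simp [Matrix.cons_val] <;> norm_num
  · rintro x hx y hy ⟨u, v, hu, hv, huv, hp⟩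
    obtain ⟨hx0, hx1, hx2, hx3, hx4, hx5, hx6, hx7⟩ := hx
    obtain ⟨hy0, hy1, hy2, hy3, hy4, hy5, hy6, hy7⟩ := hy
    have h0 := congrFun hp 0
    have h1 := congrFun hp 1
    have h2 := congrFun hp 2
    have h3 := congrFun hp 3
    simp [Pi.add_apply, Pi.smul_apply, smul_eq_mul] at h0 h1 h2 h3
    -- coordinate 0
    obtain ⟨ex0, ey0⟩ := seg_ge hu hv huv hx0 hy0 h0
    -- coordinate 3
    obtain ⟨ex3, ey3⟩ := seg_le hu hv huv hx4 hy4 h3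
    -- coordinate 2
    obtain ⟨ex2, ey2⟩ := seg_le hu hv huv (by linarith : x 2 ≤ 3) (by linarith : y 2 ≤ 3)
      (by linarith : u * x 2 + v * y 2 = 3)
    -- coordinate 1
    obtain ⟨ex1, ey1⟩ := seg_ge hu hv huv (by linarith : (3/2 : ℝ) ≤ x 1)
      (by linarith : (3/2 : ℝ) ≤ y 1) (by linarith : u * x 1 + v * y 1 = 3/2)
    · funext i
      fin_cases i <;> simp_all
  · intro h
    obtain ⟨z, hz⟩ := h 1
    simp only [Matrix.cons_val_one, Matrix.cons_val_zero] at hz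
    have : (2 : ℝ) * z = 3 := by rw [← hz]; norm_num
    have h3 : (2 * z : ℤ) = 3 := by exact_mod_cast this
    omega
end

section
/- The Gelfand–Tsetlin polytope GT_{C_2}(λ) of type C_2 for λ = λ_1 ϖ_1 + λ_2 ϖ_2 with λ_1, λ_2 nonnegative integers, defined as the set of (a¹_1, b²_1, a¹_2, a²_1) ∈ ℝ^4 with λ_1+λ_2 ≥ a¹_1 ≥ λ_2 ≥ a¹_2 ≥ 0, a¹_1 ≥ b²_1 ≥ a¹_2, b²_1 ≥ a²_1 ≥ 0, is a lattice polytope (all its vertices have integer coordinates). -/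
/-- If `p` is an extreme point of `s` and both `p + ε • d` and `p - ε • d` lie in `s`
for some `ε > 0`, then `d = 0`. -/
lemma perturb_zero {s : Set (Fin 4 → ℝ)} {p d : Fin 4 → ℝ} {ε : ℝ}
    (hp : p ∈ Set.extremePoints ℝ s) (hε : 0 < ε)
    (h1 : p + ε • d ∈ s) (h2 : p - ε • d ∈ s) : d = 0 := by
  have h := (hp.2 h1 h2 ⟨1/2, 1/2, by norm_num, by norm_num, by norm_num, by module⟩)
  have h' : ε • d = 0 := by
    have := congrArg (· - p) h
    simpa [add_sub_cancel_left] using this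
  rcases smul_eq_zero.mp h' with h|h
  · exact absurd h hε.ne'
  · exact h

/-- The Gelfand–Tsetlin polytope `GT_{C₂}(λ)` of type `C₂` for
`λ = λ₁ ϖ₁ + λ₂ ϖ₂` with `λ₁, λ₂` nonnegative integers: the set of points
`(a¹₁, b²₁, a¹₂, a²₁) ∈ ℝ⁴` with `λ₁ + λ₂ ≥ a¹₁ ≥ λ₂ ≥ a¹₂ ≥ 0`, `a¹₁ ≥ b²₁ ≥ a¹₂`,
`b²₁ ≥ a²₁ ≥ 0`, is a lattice polytope: all its vertices (extreme points) have integer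
coordinates. -/
theorem GT_C2_lattice_polytope (l₁ l₂ : ℕ) :
    ∀ p ∈ Set.extremePoints ℝ
      {a : Fin 4 → ℝ | a 0 ≤ (l₁ : ℝ) + l₂ ∧ (l₂ : ℝ) ≤ a 0 ∧ a 2 ≤ (l₂ : ℝ) ∧ 0 ≤ a 2 ∧
        a 1 ≤ a 0 ∧ a 2 ≤ a 1 ∧ a 3 ≤ a 1 ∧ 0 ≤ a 3},
      ∀ i, ∃ z : ℤ, p i = (z : ℝ) := by
  intro p hp
  obtain ⟨c1, c2, c3, c4, c5, c6, c7, c8⟩ := hp.1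
  -- p 3 = 0 or p 3 = p 1
  have h3cases : p 3 = 0 ∨ p 3 = p 1 := by
    by_contra hc
    push_neg at hc
    obtain ⟨hc0, hc1⟩ := hc
    have ha : 0 < p 3 := lt_of_le_of_ne c8 (Ne.symm hc0)
    have hb : p 3 < p 1 := lt_of_le_of_ne c7 hc1
    set ε := min (p 3) (p 1 - p 3) with hεdef
    have hε : 0 < ε := lt_min ha (by linarith)
    have hεa : ε ≤ p 3 := min_le_left _ _
    have hεb : ε ≤ p 1 - p 3 := min_le_right _ _
    have hd := perturb_zero hp hε (d := ![0,0,0,1]) (by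
      simp only [Set.mem_setOf_eq, Pi.add_apply, Pi.smul_apply]
      simp
      refine ⟨by linarith, by linarith, by linarith, by linarith, by linarith,
        by linarith, by linarith, by linarith⟩) (by
      simp only [Set.mem_setOf_eq, Pi.sub_apply, Pi.smul_apply]
      simp
      refine ⟨by linarith, by linarith, by linarith, by linarith, by linarith,
        by linarith, by linarith, by linarith⟩)
    have := congrFun hd 3
    norm_num [show (![0,0,0,1] : Fin 4 → ℝ) 3 = 1 from rfl] at this
  -- p 2 = 0 or p 2 = l₂ or p 2 = p 1
  have h2cases : p 2 = 0 ∨ p 2 = (l₂ : ℝ) ∨ p 2 = p 1 := by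
    by_contra hc
    push_neg at hc
    obtain ⟨hc0, hc1, hc2⟩ := hc
    have ha : 0 < p 2 := lt_of_le_of_ne c4 (Ne.symm hc0)
    have hb : p 2 < (l₂ : ℝ) := lt_of_le_of_ne c3 hc1
    have hcc : p 2 < p 1 := lt_of_le_of_ne c6 hc2
    set ε := min (p 2) (min ((l₂ : ℝ) - p 2) (p 1 - p 2)) with hεdef
    have hε : 0 < ε := lt_min ha (lt_min (by linarith) (by linarith))
    have hεa : ε ≤ p 2 := min_le_left _ _
    have hεb : ε ≤ (l₂ : ℝ) - p 2 := le_trans (min_le_right _ _) (min_le_left _ _)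
    have hεc : ε ≤ p 1 - p 2 := le_trans (min_le_right _ _) (min_le_right _ _)
    have hd := perturb_zero hp hε (d := ![0,0,1,0]) (by
      simp only [Set.mem_setOf_eq, Pi.add_apply, Pi.smul_apply]
      simp
      refine ⟨by linarith, by linarith, by linarith, by linarith, by linarith,
        by linarith, by linarith, by linarith⟩) (by
      simp only [Set.mem_setOf_eq, Pi.sub_apply, Pi.smul_apply]
      simp
      refine ⟨by linarith, by linarith, by linarith, by linarith, by linarith,
        by linarith, by linarith, by linarith⟩)
    have := congrFun hd 2
    norm_num [show (![0,0,1,0] : Fin 4 → ℝ) 2 = 1 from rfl] at this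
  -- p 1 = 0 or p 1 = p 2 or p 1 = p 0
  have h1cases : p 1 = 0 ∨ p 1 = p 2 ∨ p 1 = p 0 := by
    by_contra hc
    push_neg at hc
    obtain ⟨hc0, hc1, hc2⟩ := hc
    have ha : 0 < p 1 := lt_of_le_of_ne (le_trans c4 c6) (Ne.symm hc0)
    have hb : p 2 < p 1 := lt_of_le_of_ne c6 (Ne.symm hc1)
    have hcc : p 1 < p 0 := lt_of_le_of_ne c5 hc2
    rcases h3cases with h3 | h3
    · -- perturb e1
      set ε := min (p 1 - p 2) (p 0 - p 1) with hεdef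
      have hε : 0 < ε := lt_min (by linarith) (by linarith)
      have hεa : ε ≤ p 1 - p 2 := min_le_left _ _
      have hεb : ε ≤ p 0 - p 1 := min_le_right _ _
      have hd := perturb_zero hp hε (d := ![0,1,0,0]) (by
        simp only [Set.mem_setOf_eq, Pi.add_apply, Pi.smul_apply]
        simp
        refine ⟨by linarith, by linarith, by linarith, by linarith, by linarith,
          by linarith, by linarith, by linarith⟩) (by
        simp only [Set.mem_setOf_eq, Pi.sub_apply, Pi.smul_apply]
        simp
        refine ⟨by linarith, by linarith, by linarith, by linarith, by linarith,
          by linarith, by linarith, by linarith⟩)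
      have := congrFun hd 1
      norm_num at this
    · -- p 3 = p 1, perturb e1 + e3
      set ε := min (p 1 - p 2) (p 0 - p 1) with hεdef
      have hε : 0 < ε := lt_min (by linarith) (by linarith)
      have hεa : ε ≤ p 1 - p 2 := min_le_left _ _
      have hεb : ε ≤ p 0 - p 1 := min_le_right _ _
      have hd := perturb_zero hp hε (d := ![0,1,0,1]) (by
        simp only [Set.mem_setOf_eq, Pi.add_apply, Pi.smul_apply]
        simp
        refine ⟨by linarith, by linarith, by linarith, by linarith, by linarith,
          by linarith, by linarith, by linarith⟩) (by
        simp only [Set.mem_setOf_eq, Pi.sub_apply, Pi.smul_apply]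
        simp
        refine ⟨by linarith, by linarith, by linarith, by linarith, by linarith,
          by linarith, by linarith, by linarith⟩)
      have := congrFun hd 1
      norm_num at this
  -- p 0 = l₂ or p 0 = l₁ + l₂
  have h0cases : p 0 = (l₂ : ℝ) ∨ p 0 = (l₁ : ℝ) + l₂ := by
    by_contra hc
    push_neg at hc
    obtain ⟨hc0, hc1⟩ := hc
    have ha : (l₂ : ℝ) < p 0 := lt_of_le_of_ne c2 (Ne.symm hc0)
    have hb : p 0 < (l₁ : ℝ) + l₂ := lt_of_le_of_ne c1 hc1
    -- first: p 1 = p 0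
    have h10 : p 1 = p 0 := by
      by_contra hc2
      have hcc : p 1 < p 0 := lt_of_le_of_ne c5 hc2
      set ε := min (p 0 - l₂) (min ((l₁ : ℝ) + l₂ - p 0) (p 0 - p 1)) with hεdef
      have hε : 0 < ε := lt_min (by linarith) (lt_min (by linarith) (by linarith))
      have hεa : ε ≤ p 0 - l₂ := min_le_left _ _
      have hεb : ε ≤ (l₁ : ℝ) + l₂ - p 0 := le_trans (min_le_right _ _) (min_le_left _ _)
      have hεc : ε ≤ p 0 - p 1 := le_trans (min_le_right _ _) (min_le_right _ _)
      have hd := perturb_zero hp hε (d := ![1,0,0,0]) (by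
        simp only [Set.mem_setOf_eq, Pi.add_apply, Pi.smul_apply]
        simp
        refine ⟨by linarith, by linarith, by linarith, by linarith, by linarith,
          by linarith, by linarith, by linarith⟩) (by
        simp only [Set.mem_setOf_eq, Pi.sub_apply, Pi.smul_apply]
        simp
        refine ⟨by linarith, by linarith, by linarith, by linarith, by linarith,
          by linarith, by linarith, by linarith⟩)
      have := congrFun hd 0
      norm_num at this
    have h21 : p 2 < p 1 := by
      have : p 2 ≤ (l₂ : ℝ) := c3
      linarith
    set ε := min (p 0 - l₂) (min ((l₁ : ℝ) + l₂ - p 0) (p 1 - p 2)) with hεdef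
    have hε : 0 < ε := lt_min (by linarith) (lt_min (by linarith) (by linarith))
    have hεa : ε ≤ p 0 - l₂ := min_le_left _ _
    have hεb : ε ≤ (l₁ : ℝ) + l₂ - p 0 := le_trans (min_le_right _ _) (min_le_left _ _)
    have hεc : ε ≤ p 1 - p 2 := le_trans (min_le_right _ _) (min_le_right _ _)
    rcases h3cases with h3 | h3
    · -- perturb e0 + e1
      have hd := perturb_zero hp hε (d := ![1,1,0,0]) (by
        simp only [Set.mem_setOf_eq, Pi.add_apply, Pi.smul_apply]
        simp
        refine ⟨by linarith, by linarith, by linarith, by linarith, by linarith,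
          by linarith, by linarith, by linarith⟩) (by
        simp only [Set.mem_setOf_eq, Pi.sub_apply, Pi.smul_apply]
        simp
        refine ⟨by linarith, by linarith, by linarith, by linarith, by linarith,
          by linarith, by linarith, by linarith⟩)
      have := congrFun hd 0
      norm_num at this
    · -- perturb e0 + e1 + e3
      have hd := perturb_zero hp hε (d := ![1,1,0,1]) (by
        simp only [Set.mem_setOf_eq, Pi.add_apply, Pi.smul_apply]
        simp
        refine ⟨by linarith, by linarith, by linarith, by linarith, by linarith,
          by linarith, by linarith, by linarith⟩) (by
        simp only [Set.mem_setOf_eq, Pi.sub_apply, Pi.smul_apply]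
        simp
        refine ⟨by linarith, by linarith, by linarith, by linarith, by linarith,
          by linarith, by linarith, by linarith⟩)
      have := congrFun hd 0
      norm_num at this
  -- resolving the tie p 1 = p 2
  have h12 : p 1 = p 2 → p 2 = 0 ∨ p 2 = (l₂ : ℝ) ∨ p 1 = p 0 := by
    intro h12eq
    by_contra hc
    push_neg at hc
    obtain ⟨hc0, hc1, hc2⟩ := hc
    have ha : 0 < p 2 := lt_of_le_of_ne c4 (Ne.symm hc0)
    have hb : p 2 < (l₂ : ℝ) := lt_of_le_of_ne c3 hc1
    have hcc : p 1 < p 0 := lt_of_le_of_ne c5 hc2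
    set ε := min (p 2) (min ((l₂ : ℝ) - p 2) (p 0 - p 1)) with hεdef
    have hε : 0 < ε := lt_min ha (lt_min (by linarith) (by linarith))
    have hεa : ε ≤ p 2 := min_le_left _ _
    have hεb : ε ≤ (l₂ : ℝ) - p 2 := le_trans (min_le_right _ _) (min_le_left _ _)
    have hεc : ε ≤ p 0 - p 1 := le_trans (min_le_right _ _) (min_le_right _ _)
    rcases h3cases with h3 | h3
    · -- perturb e1 + e2
      have hd := perturb_zero hp hε (d := ![0,1,1,0]) (by
        simp only [Set.mem_setOf_eq, Pi.add_apply, Pi.smul_apply]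
        simp
        refine ⟨by linarith, by linarith, by linarith, by linarith, by linarith,
          by linarith, by linarith, by linarith⟩) (by
        simp only [Set.mem_setOf_eq, Pi.sub_apply, Pi.smul_apply]
        simp
        refine ⟨by linarith, by linarith, by linarith, by linarith, by linarith,
          by linarith, by linarith, by linarith⟩)
      have := congrFun hd 1
      norm_num at this
    · -- perturb e1 + e2 + e3
      have hd := perturb_zero hp hε (d := ![0,1,1,1]) (by
        simp only [Set.mem_setOf_eq, Pi.add_apply, Pi.smul_apply]
        simp
        refine ⟨by linarith, by linarith, by linarith, by linarith, by linarith,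
          by linarith, by linarith, by linarith⟩) (by
        simp only [Set.mem_setOf_eq, Pi.sub_apply, Pi.smul_apply]
        simp
        refine ⟨by linarith, by linarith, by linarith, by linarith, by linarith,
          by linarith, by linarith, by linarith⟩)
      have := congrFun hd 1
      norm_num at this
  -- assemble integrality of each coordinate
  have int0 : ∃ z : ℤ, p 0 = (z : ℝ) := by
    rcases h0cases with h | h
    · exact ⟨l₂, by exact_mod_cast h⟩
    · exact ⟨l₁ + l₂, by push_cast; exact_mod_cast h⟩
  have int1 : ∃ z : ℤ, p 1 = (z : ℝ) := by
    rcases h1cases with h | h | h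
    · exact ⟨0, by simpa using h⟩
    · rcases h12 h with h2 | h2 | h2
      · exact ⟨0, by rw [h, h2]; norm_num⟩
      · exact ⟨l₂, by rw [h, h2]; norm_num⟩
      · rw [h2]; exact int0
    · rw [h]; exact int0
  have int2 : ∃ z : ℤ, p 2 = (z : ℝ) := by
    rcases h2cases with h | h | h
    · exact ⟨0, by simpa using h⟩
    · exact ⟨l₂, by exact_mod_cast h⟩
    · rw [h]; exact int1
  have int3 : ∃ z : ℤ, p 3 = (z : ℝ) := by
    rcases h3cases with h | h
    · exact ⟨0, by simpa using h⟩
    · rw [h]; exact int1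
  intro i
  fin_cases i
  · exact int0
  · exact int1
  · exact int2
  · exact int3
end

section
/- The cone in ℝ^6 defined by the seven inequalities a_1 ≥ 0, a_3 - a_4 ≥ 0, a_5 - a_6 ≥ 0, a_6 ≥ 0, a_2 ≥ 0, a_3 - a_5 ≥ 0, a_4 - a_6 ≥ 0 (the string cone of type A_3 for the reduced word (1,3,2,1,3,2)) has exactly 7 facets; in particular, none of the seven inequalities is redundant and the cone is not simplicial. -/
/-- `F` is a facet of the cone `C ⊆ ℝ^N`: the intersection of `C` with the kernel of a
linear functional that is nonnegative on `C`, of dimension `N - 1`. -/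
def IsFacetOf {N : ℕ} (C F : Set (Fin N → ℝ)) : Prop :=
  ∃ f : (Fin N → ℝ) →ₗ[ℝ] ℝ, (∀ x ∈ C, 0 ≤ f x) ∧ F = {x ∈ C | f x = 0} ∧
    Module.finrank ℝ (Submodule.span ℝ F) = N - 1

/-- A cone in `ℝ^N` is simplicial if it is the set of nonnegative combinations of `N`
linearly independent vectors. -/
def IsSimplicialCone {N : ℕ} (C : Set (Fin N → ℝ)) : Prop :=
  ∃ v : Fin N → (Fin N → ℝ), LinearIndependent ℝ v ∧
    C = {x | ∃ c : Fin N → ℝ, (∀ i, 0 ≤ c i) ∧ x = ∑ i, c i • v i}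

open Module Submodule

def SC (a : Fin 6 → ℝ) : Prop :=
  0 ≤ a 0 ∧ 0 ≤ a 2 - a 3 ∧ 0 ≤ a 4 - a 5 ∧ 0 ≤ a 5 ∧ 0 ≤ a 1 ∧ 0 ≤ a 2 - a 4 ∧ 0 ≤ a 3 - a 5

def CC : Set (Fin 6 → ℝ) := {a | SC a}

def vvn {n : ℕ} (L : List (ℕ × ℕ)) (k : Fin n) (i : Fin 6) : ℝ :=
  if ((k : ℕ), (i : ℕ)) ∈ L then 1 else 0

def rr : Fin 7 → Fin 6 → ℝ :=
  vvn [(0,0),(1,1),(2,2),(3,2),(3,3),(4,2),(4,4),(5,2),(5,3),(5,4),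
      (6,2),(6,3),(6,4),(6,5)]

lemma rays_mem : ∀ j, SC (rr j) := by
  intro j
  fin_cases j <;> simp (config := { decide := true }) [SC, rr, vvn] <;> norm_num

lemma decomp {a : Fin 6 → ℝ} (ha : SC a) :
    a = a 0 • rr 0 + a 1 • rr 1 + (a 2 - max (a 3) (a 4)) • rr 2 + (a 3 - min (a 3) (a 4)) • rr 3
      + (a 4 - min (a 3) (a 4)) • rr 4 + (min (a 3) (a 4) - a 5) • rr 5 + a 5 • rr 6 := by
  rcases le_total (a 3) (a 4) with h | h <;>
    [rw [min_eq_left h, max_eq_right h]; rw [min_eq_right h, max_eq_left h]] <;>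
    funext j <;> fin_cases j <;>
    simp (config := { decide := true }) [rr, vvn] <;> ring

noncomputable def pj (i : Fin 6) : (Fin 6 → ℝ) →ₗ[ℝ] ℝ := LinearMap.proj i

lemma frepr2 (f : (Fin 6 → ℝ) →ₗ[ℝ] ℝ) (x : Fin 6 → ℝ)
    (hrel : f (rr 5) = f (rr 3) + f (rr 4) - f (rr 2)) :
    f x = x 0 * f (rr 0) + x 1 * f (rr 1) + x 2 * f (rr 2) + x 3 * (f (rr 3) - f (rr 2))
      + x 4 * (f (rr 4) - f (rr 2)) + x 5 * (f (rr 6) - f (rr 5)) := by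
  have h : x = x 0 • rr 0 + x 1 • rr 1 + (x 2 - x 3 - x 4 + x 5) • rr 2 + (x 3 - x 5) • rr 3
      + (x 4 - x 5) • rr 4 + (0:ℝ) • rr 5 + x 5 • rr 6 := by
    funext j
    fin_cases j <;> simp (config := { decide := true }) [rr, vvn] <;> ring
  calc f x = _ := congrArg f h
    _ = _ := by
        simp only [map_add, map_smul, smul_eq_mul]
        linear_combination (x 5) * hrel

lemma hrel (f : (Fin 6 → ℝ) →ₗ[ℝ] ℝ) : f (rr 5) = f (rr 3) + f (rr 4) - f (rr 2) := by
  have h : rr 5 = rr 3 + rr 4 - rr 2 := by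
    funext j; fin_cases j <;> simp (config := { decide := true }) [rr, vvn]
  rw [h, map_sub, map_add]

lemma frepr (f : (Fin 6 → ℝ) →ₗ[ℝ] ℝ) (x : Fin 6 → ℝ) :
    f x = x 0 * f (rr 0) + x 1 * f (rr 1) + x 2 * f (rr 2) + x 3 * (f (rr 3) - f (rr 2))
      + x 4 * (f (rr 4) - f (rr 2)) + x 5 * (f (rr 6) - f (rr 5)) := frepr2 f x (hrel f)

lemma zero_coeffs {f : (Fin 6 → ℝ) →ₗ[ℝ] ℝ} (hpos : ∀ j, 0 ≤ f (rr j))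
    {a : Fin 6 → ℝ} (ha : SC a) (h0 : f a = 0) :
    a 0 * f (rr 0) = 0 ∧ a 1 * f (rr 1) = 0 ∧ (a 2 - max (a 3) (a 4)) * f (rr 2) = 0 ∧
    (a 3 - min (a 3) (a 4)) * f (rr 3) = 0 ∧ (a 4 - min (a 3) (a 4)) * f (rr 4) = 0 ∧
    (min (a 3) (a 4) - a 5) * f (rr 5) = 0 ∧ a 5 * f (rr 6) = 0 := by
  obtain ⟨h1, h2, h3, h4, h5, h6, h7⟩ := ha
  have hsum : a 0 * f (rr 0) + a 1 * f (rr 1) + (a 2 - max (a 3) (a 4)) * f (rr 2)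
      + (a 3 - min (a 3) (a 4)) * f (rr 3) + (a 4 - min (a 3) (a 4)) * f (rr 4)
      + (min (a 3) (a 4) - a 5) * f (rr 5) + a 5 * f (rr 6) = 0 := by
    have hd := congrArg f (decomp ⟨h1, h2, h3, h4, h5, h6, h7⟩)
    simp only [map_add, map_smul, smul_eq_mul] at hd
    linarith [hd, h0]
  have c1 : 0 ≤ a 0 * f (rr 0) := mul_nonneg h1 (hpos 0)
  have c2 : 0 ≤ a 1 * f (rr 1) := mul_nonneg h5 (hpos 1)
  have c3 : 0 ≤ (a 2 - max (a 3) (a 4)) * f (rr 2) :=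
    mul_nonneg (by rcases max_cases (a 3) (a 4) with ⟨hm, _⟩ | ⟨hm, _⟩ <;> rw [hm] <;> linarith)
      (hpos 2)
  have c4 : 0 ≤ (a 3 - min (a 3) (a 4)) * f (rr 3) :=
    mul_nonneg (by rcases min_cases (a 3) (a 4) with ⟨hm, _⟩ | ⟨hm, _⟩ <;> rw [hm] <;> linarith)
      (hpos 3)
  have c5 : 0 ≤ (a 4 - min (a 3) (a 4)) * f (rr 4) :=
    mul_nonneg (by rcases min_cases (a 3) (a 4) with ⟨hm, _⟩ | ⟨hm, _⟩ <;> rw [hm] <;> linarith)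
      (hpos 4)
  have c6 : 0 ≤ (min (a 3) (a 4) - a 5) * f (rr 5) :=
    mul_nonneg (by rcases min_cases (a 3) (a 4) with ⟨hm, _⟩ | ⟨hm, _⟩ <;> rw [hm] <;> linarith)
      (hpos 5)
  have c7 : 0 ≤ a 5 * f (rr 6) := mul_nonneg h4 (hpos 6)
  refine ⟨?_, ?_, ?_, ?_, ?_, ?_, ?_⟩ <;> linarith

noncomputable def combo (w : Fin 4 → (Fin 6 → ℝ)) : (Fin 4 → ℝ) →ₗ[ℝ] (Fin 6 → ℝ) where
  toFun := fun d => ∑ i, d i • w i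
  map_add' := by intro d e; simp [add_smul, Finset.sum_add_distrib]
  map_smul' := by intro c d; simp [smul_smul, Finset.smul_sum]

lemma span_le_four {F : Set (Fin 6 → ℝ)} (w : Fin 4 → (Fin 6 → ℝ))
    (h : ∀ x ∈ F, ∃ d : Fin 4 → ℝ, x = ∑ i, d i • w i) :
    Module.finrank ℝ (span ℝ F) ≤ 4 := by
  have hle : span ℝ F ≤ LinearMap.range (combo w) := by
    rw [span_le]
    intro x hx
    rcases h x hx with ⟨d, rfl⟩
    exact ⟨d, rfl⟩
  calc Module.finrank ℝ (span ℝ F) ≤ Module.finrank ℝ (LinearMap.range (combo w)) :=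
        Submodule.finrank_mono hle
    _ ≤ Module.finrank ℝ (Fin 4 → ℝ) := (combo w).finrank_range_le
    _ = 4 := by simp

lemma finrank_five {f : (Fin 6 → ℝ) →ₗ[ℝ] ℝ} {F : Set (Fin 6 → ℝ)}
    (hker : ∀ x ∈ F, f x = 0) {x0 : Fin 6 → ℝ} (hx0 : f x0 ≠ 0)
    {v : Fin 5 → (Fin 6 → ℝ)} (hv : LinearIndependent ℝ v) (hvF : ∀ i, v i ∈ F) :
    Module.finrank ℝ (span ℝ F) = 5 := by
  apply le_antisymm
  · have h1 : span ℝ F ≤ LinearMap.ker f := span_le.2 fun x hx => hker x hx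
    have hr : LinearMap.range f = ⊤ := by
      rw [LinearMap.range_eq_top]
      intro c
      exact ⟨(c / f x0) • x0, by simp [smul_eq_mul]; field_simp⟩
    have h2 := f.finrank_range_add_finrank_ker
    rw [hr] at h2
    simp [Module.finrank_self] at h2
    have h6 : Module.finrank ℝ (Fin 6 → ℝ) = 6 := by simp
    have := Submodule.finrank_mono h1
    omega
  · have h3 : span ℝ (Set.range v) ≤ span ℝ F := span_mono (Set.range_subset_iff.2 hvF)
    have h4 := finrank_span_eq_card hv
    simp only [Fintype.card_fin] at h4
    calc 5 = Module.finrank ℝ (span ℝ (Set.range v)) := h4.symm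
      _ ≤ _ := Submodule.finrank_mono h3


def v6 : Fin 6 → Fin 6 → ℝ :=
  vvn [(0,0),(1,1),(2,2),(3,2),(3,3),(4,2),(4,4),(5,2),(5,3),(5,4),(5,5)]

lemma span_ge_six {F : Set (Fin 6 → ℝ)} (hCF : CC ⊆ F) : 6 ≤ Module.finrank ℝ (span ℝ F) := by
  have hv : LinearIndependent ℝ v6 := by
    rw [Fintype.linearIndependent_iff]
    intro g hg
    have h0 := congrFun hg 0
    have h1 := congrFun hg 1
    have h2 := congrFun hg 2
    have h3 := congrFun hg 3
    have h4 := congrFun hg 4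
    have h5 := congrFun hg 5
    simp (config := { decide := true }) [Fin.sum_univ_six, v6, vvn] at h0 h1 h2 h3 h4 h5
    intro i
    fin_cases i <;> simp <;> linarith
  have h3 : span ℝ (Set.range v6) ≤ span ℝ F := by
    apply span_mono
    rw [Set.range_subset_iff]
    intro i
    apply hCF
    show SC (v6 i)
    fin_cases i <;> simp (config := { decide := true }) [SC, v6, vvn] <;> norm_num
  have h4 := finrank_span_eq_card hv
  simp only [Fintype.card_fin] at h4
  calc 6 = _ := h4.symm
    _ ≤ _ := Submodule.finrank_mono h3

noncomputable def fb (k : Fin 7) : (Fin 6 → ℝ) →ₗ[ℝ] ℝ :=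
  if k = 0 then pj 0 else if k = 1 then pj 2 - pj 3 else if k = 2 then pj 4 - pj 5
  else if k = 3 then pj 5 else if k = 4 then pj 1 else if k = 5 then pj 2 - pj 4
  else pj 3 - pj 5

def FB (k : Fin 7) : Set (Fin 6 → ℝ) := {x ∈ CC | fb k x = 0}

lemma fbev0 (x : Fin 6 → ℝ) : fb 0 x = x 0 := by
  simp (config := { decide := true }) [fb, pj]

def fam0 : Fin 5 → Fin 6 → ℝ := vvn [(0,1),(1,2),(2,2),(2,3),(3,2),(3,4),(4,2),(4,3),(4,4),(4,5)]

lemma indep0 : LinearIndependent ℝ fam0 := by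
  rw [Fintype.linearIndependent_iff]
  intro g hg
  have h0 := congrFun hg 0
  have h1 := congrFun hg 1
  have h2 := congrFun hg 2
  have h3 := congrFun hg 3
  have h4 := congrFun hg 4
  have h5 := congrFun hg 5
  simp (config := { decide := true }) [Fin.sum_univ_five, fam0, vvn] at h0 h1 h2 h3 h4 h5
  intro i
  fin_cases i <;> simp <;> linarith

lemma fammem0 : ∀ i, fam0 i ∈ FB 0 := by
  intro i
  refine ⟨?_, ?_⟩
  · show SC (fam0 i)
    fin_cases i <;> simp (config := { decide := true }) [SC, fam0, vvn] <;> norm_num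
  · show fb 0 (fam0 i) = 0
    rw [fbev0]
    fin_cases i <;> simp (config := { decide := true }) [fam0, vvn]

lemma facet0 : IsFacetOf CC (FB 0) := by
  refine ⟨fb 0, ?_, rfl, ?_⟩
  · intro x hx
    rw [fbev0]
    have hx : SC x := hx
    linarith [hx.1]
  · show Module.finrank ℝ (span ℝ (FB 0)) = 6 - 1
    have hx0 : fb 0 (rr 0) ≠ 0 := by
      rw [fbev0]
      simp (config := { decide := true }) [rr, vvn]
    exact finrank_five (fun x hx => hx.2) hx0 indep0 fammem0

lemma fbev1 (x : Fin 6 → ℝ) : fb 1 x = x 2 - x 3 := by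
  simp (config := { decide := true }) [fb, pj]

def fam1 : Fin 5 → Fin 6 → ℝ := vvn [(0,0),(1,1),(2,2),(2,3),(3,2),(3,3),(3,4),(4,2),(4,3),(4,4),(4,5)]

lemma indep1 : LinearIndependent ℝ fam1 := by
  rw [Fintype.linearIndependent_iff]
  intro g hg
  have h0 := congrFun hg 0
  have h1 := congrFun hg 1
  have h2 := congrFun hg 2
  have h3 := congrFun hg 3
  have h4 := congrFun hg 4
  have h5 := congrFun hg 5
  simp (config := { decide := true }) [Fin.sum_univ_five, fam1, vvn] at h0 h1 h2 h3 h4 h5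
  intro i
  fin_cases i <;> simp <;> linarith

lemma fammem1 : ∀ i, fam1 i ∈ FB 1 := by
  intro i
  refine ⟨?_, ?_⟩
  · show SC (fam1 i)
    fin_cases i <;> simp (config := { decide := true }) [SC, fam1, vvn] <;> norm_num
  · show fb 1 (fam1 i) = 0
    rw [fbev1]
    fin_cases i <;> simp (config := { decide := true }) [fam1, vvn]

lemma facet1 : IsFacetOf CC (FB 1) := by
  refine ⟨fb 1, ?_, rfl, ?_⟩
  · intro x hx
    rw [fbev1]
    have hx : SC x := hx
    linarith [hx.2.1]
  · show Module.finrank ℝ (span ℝ (FB 1)) = 6 - 1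
    have hx0 : fb 1 (rr 2) ≠ 0 := by
      rw [fbev1]
      simp (config := { decide := true }) [rr, vvn]
    exact finrank_five (fun x hx => hx.2) hx0 indep1 fammem1

lemma fbev2 (x : Fin 6 → ℝ) : fb 2 x = x 4 - x 5 := by
  simp (config := { decide := true }) [fb, pj]

def fam2 : Fin 5 → Fin 6 → ℝ := vvn [(0,0),(1,1),(2,2),(3,2),(3,3),(4,2),(4,3),(4,4),(4,5)]

lemma indep2 : LinearIndependent ℝ fam2 := by
  rw [Fintype.linearIndependent_iff]
  intro g hg
  have h0 := congrFun hg 0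
  have h1 := congrFun hg 1
  have h2 := congrFun hg 2
  have h3 := congrFun hg 3
  have h4 := congrFun hg 4
  have h5 := congrFun hg 5
  simp (config := { decide := true }) [Fin.sum_univ_five, fam2, vvn] at h0 h1 h2 h3 h4 h5
  intro i
  fin_cases i <;> simp <;> linarith

lemma fammem2 : ∀ i, fam2 i ∈ FB 2 := by
  intro i
  refine ⟨?_, ?_⟩
  · show SC (fam2 i)
    fin_cases i <;> simp (config := { decide := true }) [SC, fam2, vvn] <;> norm_num
  · show fb 2 (fam2 i) = 0
    rw [fbev2]
    fin_cases i <;> simp (config := { decide := true }) [fam2, vvn]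

lemma facet2 : IsFacetOf CC (FB 2) := by
  refine ⟨fb 2, ?_, rfl, ?_⟩
  · intro x hx
    rw [fbev2]
    have hx : SC x := hx
    linarith [hx.2.2.1]
  · show Module.finrank ℝ (span ℝ (FB 2)) = 6 - 1
    have hx0 : fb 2 (rr 4) ≠ 0 := by
      rw [fbev2]
      simp (config := { decide := true }) [rr, vvn]
    exact finrank_five (fun x hx => hx.2) hx0 indep2 fammem2

lemma fbev3 (x : Fin 6 → ℝ) : fb 3 x = x 5 := by
  simp (config := { decide := true }) [fb, pj]

def fam3 : Fin 5 → Fin 6 → ℝ := vvn [(0,0),(1,1),(2,2),(3,2),(3,3),(4,2),(4,4)]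

lemma indep3 : LinearIndependent ℝ fam3 := by
  rw [Fintype.linearIndependent_iff]
  intro g hg
  have h0 := congrFun hg 0
  have h1 := congrFun hg 1
  have h2 := congrFun hg 2
  have h3 := congrFun hg 3
  have h4 := congrFun hg 4
  have h5 := congrFun hg 5
  simp (config := { decide := true }) [Fin.sum_univ_five, fam3, vvn] at h0 h1 h2 h3 h4 h5
  intro i
  fin_cases i <;> simp <;> linarith

lemma fammem3 : ∀ i, fam3 i ∈ FB 3 := by
  intro i
  refine ⟨?_, ?_⟩
  · show SC (fam3 i)
    fin_cases i <;> simp (config := { decide := true }) [SC, fam3, vvn] <;> norm_num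
  · show fb 3 (fam3 i) = 0
    rw [fbev3]
    fin_cases i <;> simp (config := { decide := true }) [fam3, vvn]

lemma facet3 : IsFacetOf CC (FB 3) := by
  refine ⟨fb 3, ?_, rfl, ?_⟩
  · intro x hx
    rw [fbev3]
    have hx : SC x := hx
    linarith [hx.2.2.2.1]
  · show Module.finrank ℝ (span ℝ (FB 3)) = 6 - 1
    have hx0 : fb 3 (rr 6) ≠ 0 := by
      rw [fbev3]
      simp (config := { decide := true }) [rr, vvn]
    exact finrank_five (fun x hx => hx.2) hx0 indep3 fammem3

lemma fbev4 (x : Fin 6 → ℝ) : fb 4 x = x 1 := by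
  simp (config := { decide := true }) [fb, pj]

def fam4 : Fin 5 → Fin 6 → ℝ := vvn [(0,0),(1,2),(2,2),(2,3),(3,2),(3,4),(4,2),(4,3),(4,4),(4,5)]

lemma indep4 : LinearIndependent ℝ fam4 := by
  rw [Fintype.linearIndependent_iff]
  intro g hg
  have h0 := congrFun hg 0
  have h1 := congrFun hg 1
  have h2 := congrFun hg 2
  have h3 := congrFun hg 3
  have h4 := congrFun hg 4
  have h5 := congrFun hg 5
  simp (config := { decide := true }) [Fin.sum_univ_five, fam4, vvn] at h0 h1 h2 h3 h4 h5
  intro i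
  fin_cases i <;> simp <;> linarith

lemma fammem4 : ∀ i, fam4 i ∈ FB 4 := by
  intro i
  refine ⟨?_, ?_⟩
  · show SC (fam4 i)
    fin_cases i <;> simp (config := { decide := true }) [SC, fam4, vvn] <;> norm_num
  · show fb 4 (fam4 i) = 0
    rw [fbev4]
    fin_cases i <;> simp (config := { decide := true }) [fam4, vvn]

lemma facet4 : IsFacetOf CC (FB 4) := by
  refine ⟨fb 4, ?_, rfl, ?_⟩
  · intro x hx
    rw [fbev4]
    have hx : SC x := hx
    linarith [hx.2.2.2.2.1]
  · show Module.finrank ℝ (span ℝ (FB 4)) = 6 - 1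
    have hx0 : fb 4 (rr 1) ≠ 0 := by
      rw [fbev4]
      simp (config := { decide := true }) [rr, vvn]
    exact finrank_five (fun x hx => hx.2) hx0 indep4 fammem4

lemma fbev5 (x : Fin 6 → ℝ) : fb 5 x = x 2 - x 4 := by
  simp (config := { decide := true }) [fb, pj]

def fam5 : Fin 5 → Fin 6 → ℝ := vvn [(0,0),(1,1),(2,2),(2,4),(3,2),(3,3),(3,4),(4,2),(4,3),(4,4),(4,5)]

lemma indep5 : LinearIndependent ℝ fam5 := by
  rw [Fintype.linearIndependent_iff]
  intro g hg
  have h0 := congrFun hg 0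
  have h1 := congrFun hg 1
  have h2 := congrFun hg 2
  have h3 := congrFun hg 3
  have h4 := congrFun hg 4
  have h5 := congrFun hg 5
  simp (config := { decide := true }) [Fin.sum_univ_five, fam5, vvn] at h0 h1 h2 h3 h4 h5
  intro i
  fin_cases i <;> simp <;> linarith

lemma fammem5 : ∀ i, fam5 i ∈ FB 5 := by
  intro i
  refine ⟨?_, ?_⟩
  · show SC (fam5 i)
    fin_cases i <;> simp (config := { decide := true }) [SC, fam5, vvn] <;> norm_num
  · show fb 5 (fam5 i) = 0
    rw [fbev5]
    fin_cases i <;> simp (config := { decide := true }) [fam5, vvn]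

lemma facet5 : IsFacetOf CC (FB 5) := by
  refine ⟨fb 5, ?_, rfl, ?_⟩
  · intro x hx
    rw [fbev5]
    have hx : SC x := hx
    linarith [hx.2.2.2.2.2.1]
  · show Module.finrank ℝ (span ℝ (FB 5)) = 6 - 1
    have hx0 : fb 5 (rr 2) ≠ 0 := by
      rw [fbev5]
      simp (config := { decide := true }) [rr, vvn]
    exact finrank_five (fun x hx => hx.2) hx0 indep5 fammem5

lemma fbev6 (x : Fin 6 → ℝ) : fb 6 x = x 3 - x 5 := by
  simp (config := { decide := true }) [fb, pj]

def fam6 : Fin 5 → Fin 6 → ℝ := vvn [(0,0),(1,1),(2,2),(3,2),(3,4),(4,2),(4,3),(4,4),(4,5)]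

lemma indep6 : LinearIndependent ℝ fam6 := by
  rw [Fintype.linearIndependent_iff]
  intro g hg
  have h0 := congrFun hg 0
  have h1 := congrFun hg 1
  have h2 := congrFun hg 2
  have h3 := congrFun hg 3
  have h4 := congrFun hg 4
  have h5 := congrFun hg 5
  simp (config := { decide := true }) [Fin.sum_univ_five, fam6, vvn] at h0 h1 h2 h3 h4 h5
  intro i
  fin_cases i <;> simp <;> linarith

lemma fammem6 : ∀ i, fam6 i ∈ FB 6 := by
  intro i
  refine ⟨?_, ?_⟩
  · show SC (fam6 i)
    fin_cases i <;> simp (config := { decide := true }) [SC, fam6, vvn] <;> norm_num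
  · show fb 6 (fam6 i) = 0
    rw [fbev6]
    fin_cases i <;> simp (config := { decide := true }) [fam6, vvn]

lemma facet6 : IsFacetOf CC (FB 6) := by
  refine ⟨fb 6, ?_, rfl, ?_⟩
  · intro x hx
    rw [fbev6]
    have hx : SC x := hx
    linarith [hx.2.2.2.2.2.2]
  · show Module.finrank ℝ (span ℝ (FB 6)) = 6 - 1
    have hx0 : fb 6 (rr 3) ≠ 0 := by
      rw [fbev6]
      simp (config := { decide := true }) [rr, vvn]
    exact finrank_five (fun x hx => hx.2) hx0 indep6 fammem6

lemma ne_of_wit {j k l : Fin 7} (h1 : fb k (rr j) = 0) (h2 : fb l (rr j) ≠ 0) :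
    FB k ≠ FB l := by
  intro h
  have hm : rr j ∈ FB k := ⟨rays_mem j, h1⟩
  rw [h] at hm
  exact h2 hm.2

lemma neq_0_1 : FB 0 ≠ FB 1 :=
  Ne.symm <| ne_of_wit (j := 0) (k := 1) (l := 0)
  (by rw [fbev1]; simp (config := { decide := true }) [rr, vvn])
  (by rw [fbev0]; simp (config := { decide := true }) [rr, vvn])

lemma neq_0_2 : FB 0 ≠ FB 2 :=
  Ne.symm <| ne_of_wit (j := 0) (k := 2) (l := 0)
  (by rw [fbev2]; simp (config := { decide := true }) [rr, vvn])
  (by rw [fbev0]; simp (config := { decide := true }) [rr, vvn])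

lemma neq_0_3 : FB 0 ≠ FB 3 :=
  Ne.symm <| ne_of_wit (j := 0) (k := 3) (l := 0)
  (by rw [fbev3]; simp (config := { decide := true }) [rr, vvn])
  (by rw [fbev0]; simp (config := { decide := true }) [rr, vvn])

lemma neq_0_4 : FB 0 ≠ FB 4 :=
  Ne.symm <| ne_of_wit (j := 0) (k := 4) (l := 0)
  (by rw [fbev4]; simp (config := { decide := true }) [rr, vvn])
  (by rw [fbev0]; simp (config := { decide := true }) [rr, vvn])

lemma neq_0_5 : FB 0 ≠ FB 5 :=
  Ne.symm <| ne_of_wit (j := 0) (k := 5) (l := 0)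
  (by rw [fbev5]; simp (config := { decide := true }) [rr, vvn])
  (by rw [fbev0]; simp (config := { decide := true }) [rr, vvn])

lemma neq_0_6 : FB 0 ≠ FB 6 :=
  Ne.symm <| ne_of_wit (j := 0) (k := 6) (l := 0)
  (by rw [fbev6]; simp (config := { decide := true }) [rr, vvn])
  (by rw [fbev0]; simp (config := { decide := true }) [rr, vvn])

lemma neq_1_2 : FB 1 ≠ FB 2 :=
  ne_of_wit (j := 5) (k := 1) (l := 2)
  (by rw [fbev1]; simp (config := { decide := true }) [rr, vvn])
  (by rw [fbev2]; simp (config := { decide := true }) [rr, vvn])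

lemma neq_1_3 : FB 1 ≠ FB 3 :=
  ne_of_wit (j := 6) (k := 1) (l := 3)
  (by rw [fbev1]; simp (config := { decide := true }) [rr, vvn])
  (by rw [fbev3]; simp (config := { decide := true }) [rr, vvn])

lemma neq_1_4 : FB 1 ≠ FB 4 :=
  ne_of_wit (j := 1) (k := 1) (l := 4)
  (by rw [fbev1]; simp (config := { decide := true }) [rr, vvn])
  (by rw [fbev4]; simp (config := { decide := true }) [rr, vvn])

lemma neq_1_5 : FB 1 ≠ FB 5 :=
  ne_of_wit (j := 3) (k := 1) (l := 5)
  (by rw [fbev1]; simp (config := { decide := true }) [rr, vvn])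
  (by rw [fbev5]; simp (config := { decide := true }) [rr, vvn])

lemma neq_1_6 : FB 1 ≠ FB 6 :=
  ne_of_wit (j := 3) (k := 1) (l := 6)
  (by rw [fbev1]; simp (config := { decide := true }) [rr, vvn])
  (by rw [fbev6]; simp (config := { decide := true }) [rr, vvn])

lemma neq_2_3 : FB 2 ≠ FB 3 :=
  ne_of_wit (j := 6) (k := 2) (l := 3)
  (by rw [fbev2]; simp (config := { decide := true }) [rr, vvn])
  (by rw [fbev3]; simp (config := { decide := true }) [rr, vvn])

lemma neq_2_4 : FB 2 ≠ FB 4 :=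
  ne_of_wit (j := 1) (k := 2) (l := 4)
  (by rw [fbev2]; simp (config := { decide := true }) [rr, vvn])
  (by rw [fbev4]; simp (config := { decide := true }) [rr, vvn])

lemma neq_2_5 : FB 2 ≠ FB 5 :=
  ne_of_wit (j := 2) (k := 2) (l := 5)
  (by rw [fbev2]; simp (config := { decide := true }) [rr, vvn])
  (by rw [fbev5]; simp (config := { decide := true }) [rr, vvn])

lemma neq_2_6 : FB 2 ≠ FB 6 :=
  ne_of_wit (j := 3) (k := 2) (l := 6)
  (by rw [fbev2]; simp (config := { decide := true }) [rr, vvn])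
  (by rw [fbev6]; simp (config := { decide := true }) [rr, vvn])

lemma neq_3_4 : FB 3 ≠ FB 4 :=
  ne_of_wit (j := 1) (k := 3) (l := 4)
  (by rw [fbev3]; simp (config := { decide := true }) [rr, vvn])
  (by rw [fbev4]; simp (config := { decide := true }) [rr, vvn])

lemma neq_3_5 : FB 3 ≠ FB 5 :=
  Ne.symm <| ne_of_wit (j := 6) (k := 5) (l := 3)
  (by rw [fbev5]; simp (config := { decide := true }) [rr, vvn])
  (by rw [fbev3]; simp (config := { decide := true }) [rr, vvn])

lemma neq_3_6 : FB 3 ≠ FB 6 :=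
  Ne.symm <| ne_of_wit (j := 6) (k := 6) (l := 3)
  (by rw [fbev6]; simp (config := { decide := true }) [rr, vvn])
  (by rw [fbev3]; simp (config := { decide := true }) [rr, vvn])

lemma neq_4_5 : FB 4 ≠ FB 5 :=
  Ne.symm <| ne_of_wit (j := 1) (k := 5) (l := 4)
  (by rw [fbev5]; simp (config := { decide := true }) [rr, vvn])
  (by rw [fbev4]; simp (config := { decide := true }) [rr, vvn])

lemma neq_4_6 : FB 4 ≠ FB 6 :=
  Ne.symm <| ne_of_wit (j := 1) (k := 6) (l := 4)
  (by rw [fbev6]; simp (config := { decide := true }) [rr, vvn])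
  (by rw [fbev4]; simp (config := { decide := true }) [rr, vvn])

lemma neq_5_6 : FB 5 ≠ FB 6 :=
  ne_of_wit (j := 5) (k := 5) (l := 6)
  (by rw [fbev5]; simp (config := { decide := true }) [rr, vvn])
  (by rw [fbev6]; simp (config := { decide := true }) [rr, vvn])

def tval (k j : Fin 7) : ℝ :=
  if ((k : ℕ), (j : ℕ)) ∈ [(0,0),(1,2),(1,4),(2,4),(2,5),(3,6),(4,1),(5,2),(5,3),(6,3),(6,5)]
  then 1 else 0

lemma fbvals0 : ∀ j, fb 0 (rr j) = tval 0 j := by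
  intro j
  rw [fbev0]
  fin_cases j <;> simp (config := { decide := true }) [rr, vvn, tval]

lemma fbvals1 : ∀ j, fb 1 (rr j) = tval 1 j := by
  intro j
  rw [fbev1]
  fin_cases j <;> simp (config := { decide := true }) [rr, vvn, tval]

lemma fbvals2 : ∀ j, fb 2 (rr j) = tval 2 j := by
  intro j
  rw [fbev2]
  fin_cases j <;> simp (config := { decide := true }) [rr, vvn, tval]

lemma fbvals3 : ∀ j, fb 3 (rr j) = tval 3 j := by
  intro j
  rw [fbev3]
  fin_cases j <;> simp (config := { decide := true }) [rr, vvn, tval]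

lemma fbvals4 : ∀ j, fb 4 (rr j) = tval 4 j := by
  intro j
  rw [fbev4]
  fin_cases j <;> simp (config := { decide := true }) [rr, vvn, tval]

lemma fbvals5 : ∀ j, fb 5 (rr j) = tval 5 j := by
  intro j
  rw [fbev5]
  fin_cases j <;> simp (config := { decide := true }) [rr, vvn, tval]

lemma fbvals6 : ∀ j, fb 6 (rr j) = tval 6 j := by
  intro j
  rw [fbev6]
  fin_cases j <;> simp (config := { decide := true }) [rr, vvn, tval]

lemma conclude_eq {f : (Fin 6 → ℝ) →ₗ[ℝ] ℝ} {c : ℝ} (hc : c ≠ 0) (k : Fin 7)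
    (hvals : ∀ j, f (rr j) = c * fb k (rr j)) :
    {x ∈ CC | f x = 0} = FB k := by
  have hf : ∀ x, f x = c * fb k x := by
    intro x
    rw [frepr f x, frepr (fb k) x, hvals 0, hvals 1, hvals 2, hvals 3, hvals 4, hvals 5, hvals 6]
    ring
  ext x
  simp only [FB, Set.mem_setOf_eq, hf x, mul_eq_zero]
  constructor
  · rintro ⟨h1, h2 | h2⟩
    · exact absurd h2 hc
    · exact ⟨h1, h2⟩
  · rintro ⟨h1, h2⟩
    exact ⟨h1, Or.inr h2⟩

lemma mul0 {a b : ℝ} (h : a * b = 0) (hb : 0 < b) : a = 0 := by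
  rcases mul_eq_zero.mp h with h | h
  · exact h
  · exact absurd h hb.ne'

set_option maxHeartbeats 4000000 in
lemma classify {F : Set (Fin 6 → ℝ)} (hfacet : IsFacetOf CC F) :
    F = FB 0 ∨ F = FB 1 ∨ F = FB 2 ∨ F = FB 3 ∨ F = FB 4 ∨ F = FB 5 ∨ F = FB 6 := by
  obtain ⟨f, hpos, hFeq, hdim⟩ := hfacet
  have hpos' : ∀ j, 0 ≤ f (rr j) := fun j => hpos _ (rays_mem j)
  have hR := hrel f
  have key : ∀ x ∈ F, x 0 * f (rr 0) = 0 ∧ x 1 * f (rr 1) = 0 ∧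
      (x 2 - max (x 3) (x 4)) * f (rr 2) = 0 ∧ (x 3 - min (x 3) (x 4)) * f (rr 3) = 0 ∧
      (x 4 - min (x 3) (x 4)) * f (rr 4) = 0 ∧ (min (x 3) (x 4) - x 5) * f (rr 5) = 0 ∧
      x 5 * f (rr 6) = 0 := by
    intro x hx
    rw [hFeq] at hx
    exact zero_coeffs hpos' hx.1 hx.2
  rcases (hpos' 0).lt_or_eq with hs0 | hz0
  · rcases (hpos' 1).lt_or_eq with hs1 | hz1
    · exfalso
      have hle : Module.finrank ℝ (Submodule.span ℝ F) ≤ 4 := by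
        apply span_le_four (vvn [(0,2),(1,3),(2,4),(3,5)])
        intro x hx
        obtain ⟨p0, p1, p2, p3, p4, p5, p6⟩ := key x hx
        refine ⟨fun i : Fin 4 => if i = 0 then x 2 else if i = 1 then x 3 else if i = 2 then x 4 else x 5, ?_⟩
        rcases le_total (x 3) (x 4) with hm | hm
        · rw [max_eq_right hm] at p2
          rw [min_eq_left hm] at p3 p4 p5
          have e0 := mul0 p0 hs0
          have e1 := mul0 p1 hs1
          funext jj
          fin_cases jj <;>
              (simp (config := { decide := true }) [Finset.sum_apply, Pi.smul_apply,
                smul_eq_mul, Fin.sum_univ_four, vvn]; try linarith)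
        · rw [max_eq_left hm] at p2
          rw [min_eq_right hm] at p3 p4 p5
          have e0 := mul0 p0 hs0
          have e1 := mul0 p1 hs1
          funext jj
          fin_cases jj <;>
              (simp (config := { decide := true }) [Finset.sum_apply, Pi.smul_apply,
                smul_eq_mul, Fin.sum_univ_four, vvn]; try linarith)
      omega
    · rcases (hpos' 6).lt_or_eq with hs6 | hz6
      · exfalso
        have hle : Module.finrank ℝ (Submodule.span ℝ F) ≤ 4 := by
          apply span_le_four (vvn [(0,1),(1,2),(2,3),(3,4)])
          intro x hx
          obtain ⟨p0, p1, p2, p3, p4, p5, p6⟩ := key x hx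
          refine ⟨fun i : Fin 4 => if i = 0 then x 1 else if i = 1 then x 2 else if i = 2 then x 3 else x 4, ?_⟩
          rcases le_total (x 3) (x 4) with hm | hm
          · rw [max_eq_right hm] at p2
            rw [min_eq_left hm] at p3 p4 p5
            have e0 := mul0 p0 hs0
            have e6 := mul0 p6 hs6
            funext jj
            fin_cases jj <;>
                (simp (config := { decide := true }) [Finset.sum_apply, Pi.smul_apply,
                  smul_eq_mul, Fin.sum_univ_four, vvn]; try linarith)
          · rw [max_eq_left hm] at p2
            rw [min_eq_right hm] at p3 p4 p5
            have e0 := mul0 p0 hs0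
            have e6 := mul0 p6 hs6
            funext jj
            fin_cases jj <;>
                (simp (config := { decide := true }) [Finset.sum_apply, Pi.smul_apply,
                  smul_eq_mul, Fin.sum_univ_four, vvn]; try linarith)
        omega
      · rcases (hpos' 2).lt_or_eq with hs2 | hz2
        · rcases (hpos' 3).lt_or_eq with hs3 | hz3
          · exfalso
            have hle : Module.finrank ℝ (Submodule.span ℝ F) ≤ 4 := by
              apply span_le_four (vvn [(0,1),(1,2),(1,4),(2,3),(3,5)])
              intro x hx
              obtain ⟨p0, p1, p2, p3, p4, p5, p6⟩ := key x hx
              refine ⟨fun i : Fin 4 => if i = 0 then x 1 else if i = 1 then x 2 else if i = 2 then x 3 else x 5, ?_⟩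
              rcases le_total (x 3) (x 4) with hm | hm
              · rw [max_eq_right hm] at p2
                rw [min_eq_left hm] at p3 p4 p5
                have e0 := mul0 p0 hs0
                have e2 := mul0 p2 hs2
                have e3 := mul0 p3 hs3
                funext jj
                fin_cases jj <;>
                    (simp (config := { decide := true }) [Finset.sum_apply, Pi.smul_apply,
                      smul_eq_mul, Fin.sum_univ_four, vvn]; try linarith)
              · rw [max_eq_left hm] at p2
                rw [min_eq_right hm] at p3 p4 p5
                have e0 := mul0 p0 hs0
                have e2 := mul0 p2 hs2
                have e3 := mul0 p3 hs3
                funext jj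
                fin_cases jj <;>
                    (simp (config := { decide := true }) [Finset.sum_apply, Pi.smul_apply,
                      smul_eq_mul, Fin.sum_univ_four, vvn]; try linarith)
            omega
          · rcases (hpos' 4).lt_or_eq with hs4 | hz4
            · exfalso
              have hle : Module.finrank ℝ (Submodule.span ℝ F) ≤ 4 := by
                apply span_le_four (vvn [(0,1),(1,2),(1,3),(2,4),(3,5)])
                intro x hx
                obtain ⟨p0, p1, p2, p3, p4, p5, p6⟩ := key x hx
                refine ⟨fun i : Fin 4 => if i = 0 then x 1 else if i = 1 then x 2 else if i = 2 then x 4 else x 5, ?_⟩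
                rcases le_total (x 3) (x 4) with hm | hm
                · rw [max_eq_right hm] at p2
                  rw [min_eq_left hm] at p3 p4 p5
                  have e0 := mul0 p0 hs0
                  have e2 := mul0 p2 hs2
                  have e4 := mul0 p4 hs4
                  funext jj
                  fin_cases jj <;>
                      (simp (config := { decide := true }) [Finset.sum_apply, Pi.smul_apply,
                        smul_eq_mul, Fin.sum_univ_four, vvn]; try linarith)
                · rw [max_eq_left hm] at p2
                  rw [min_eq_right hm] at p3 p4 p5
                  have e0 := mul0 p0 hs0
                  have e2 := mul0 p2 hs2
                  have e4 := mul0 p4 hs4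
                  funext jj
                  fin_cases jj <;>
                      (simp (config := { decide := true }) [Finset.sum_apply, Pi.smul_apply,
                        smul_eq_mul, Fin.sum_univ_four, vvn]; try linarith)
              omega
            · exfalso
              linarith [hR, hpos' 5]
        · rcases (hpos' 3).lt_or_eq with hs3 | hz3
          · rcases (hpos' 4).lt_or_eq with hs4 | hz4
            · exfalso
              have hle : Module.finrank ℝ (Submodule.span ℝ F) ≤ 4 := by
                apply span_le_four (vvn [(0,1),(1,2),(2,3),(2,4),(2,5)])
                intro x hx
                obtain ⟨p0, p1, p2, p3, p4, p5, p6⟩ := key x hx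
                have hs5 : 0 < f (rr 5) := by linarith [hR]
                refine ⟨fun i : Fin 4 => if i = 0 then x 1 else if i = 1 then x 2 else if i = 2 then x 3 else (0:ℝ), ?_⟩
                rcases le_total (x 3) (x 4) with hm | hm
                · rw [max_eq_right hm] at p2
                  rw [min_eq_left hm] at p3 p4 p5
                  have e0 := mul0 p0 hs0
                  have e3 := mul0 p3 hs3
                  have e4 := mul0 p4 hs4
                  have e5 := mul0 p5 hs5
                  funext jj
                  fin_cases jj <;>
                      (simp (config := { decide := true }) [Finset.sum_apply, Pi.smul_apply,
                        smul_eq_mul, Fin.sum_univ_four, vvn]; try linarith)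
                · rw [max_eq_left hm] at p2
                  rw [min_eq_right hm] at p3 p4 p5
                  have e0 := mul0 p0 hs0
                  have e3 := mul0 p3 hs3
                  have e4 := mul0 p4 hs4
                  have e5 := mul0 p5 hs5
                  funext jj
                  fin_cases jj <;>
                      (simp (config := { decide := true }) [Finset.sum_apply, Pi.smul_apply,
                        smul_eq_mul, Fin.sum_univ_four, vvn]; try linarith)
              omega
            · exfalso
              have hle : Module.finrank ℝ (Submodule.span ℝ F) ≤ 4 := by
                apply span_le_four (vvn [(0,1),(1,2),(2,3),(2,5),(3,4)])
                intro x hx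
                obtain ⟨p0, p1, p2, p3, p4, p5, p6⟩ := key x hx
                have hs5 : 0 < f (rr 5) := by linarith [hR]
                refine ⟨fun i : Fin 4 => if i = 0 then x 1 else if i = 1 then x 2 else if i = 2 then x 3 else x 4, ?_⟩
                rcases le_total (x 3) (x 4) with hm | hm
                · rw [max_eq_right hm] at p2
                  rw [min_eq_left hm] at p3 p4 p5
                  have e0 := mul0 p0 hs0
                  have e3 := mul0 p3 hs3
                  have e5 := mul0 p5 hs5
                  funext jj
                  fin_cases jj <;>
                      (simp (config := { decide := true }) [Finset.sum_apply, Pi.smul_apply,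
                        smul_eq_mul, Fin.sum_univ_four, vvn]; try linarith)
                · rw [max_eq_left hm] at p2
                  rw [min_eq_right hm] at p3 p4 p5
                  have e0 := mul0 p0 hs0
                  have e3 := mul0 p3 hs3
                  have e5 := mul0 p5 hs5
                  funext jj
                  fin_cases jj <;>
                      (simp (config := { decide := true }) [Finset.sum_apply, Pi.smul_apply,
                        smul_eq_mul, Fin.sum_univ_four, vvn]; try linarith)
              omega
          · rcases (hpos' 4).lt_or_eq with hs4 | hz4
            · exfalso
              have hle : Module.finrank ℝ (Submodule.span ℝ F) ≤ 4 := by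
                apply span_le_four (vvn [(0,1),(1,2),(2,3),(3,4),(3,5)])
                intro x hx
                obtain ⟨p0, p1, p2, p3, p4, p5, p6⟩ := key x hx
                have hs5 : 0 < f (rr 5) := by linarith [hR]
                refine ⟨fun i : Fin 4 => if i = 0 then x 1 else if i = 1 then x 2 else if i = 2 then x 3 else x 4, ?_⟩
                rcases le_total (x 3) (x 4) with hm | hm
                · rw [max_eq_right hm] at p2
                  rw [min_eq_left hm] at p3 p4 p5
                  have e0 := mul0 p0 hs0
                  have e4 := mul0 p4 hs4
                  have e5 := mul0 p5 hs5
                  funext jj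
                  fin_cases jj <;>
                      (simp (config := { decide := true }) [Finset.sum_apply, Pi.smul_apply,
                        smul_eq_mul, Fin.sum_univ_four, vvn]; try linarith)
                · rw [max_eq_left hm] at p2
                  rw [min_eq_right hm] at p3 p4 p5
                  have e0 := mul0 p0 hs0
                  have e4 := mul0 p4 hs4
                  have e5 := mul0 p5 hs5
                  funext jj
                  fin_cases jj <;>
                      (simp (config := { decide := true }) [Finset.sum_apply, Pi.smul_apply,
                        smul_eq_mul, Fin.sum_univ_four, vvn]; try linarith)
              omega
            · have hFB : F = FB 0 := by
                refine hFeq.trans (conclude_eq (c := f (rr 0)) hs0.ne' 0 ?_)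
                intro j
                rw [fbvals0]
                fin_cases j <;> (simp (config := { decide := true }) [tval]; try linarith [hR])
              exact Or.inl (hFB)
  · rcases (hpos' 1).lt_or_eq with hs1 | hz1
    · rcases (hpos' 6).lt_or_eq with hs6 | hz6
      · exfalso
        have hle : Module.finrank ℝ (Submodule.span ℝ F) ≤ 4 := by
          apply span_le_four (vvn [(0,0),(1,2),(2,3),(3,4)])
          intro x hx
          obtain ⟨p0, p1, p2, p3, p4, p5, p6⟩ := key x hx
          refine ⟨fun i : Fin 4 => if i = 0 then x 0 else if i = 1 then x 2 else if i = 2 then x 3 else x 4, ?_⟩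
          rcases le_total (x 3) (x 4) with hm | hm
          · rw [max_eq_right hm] at p2
            rw [min_eq_left hm] at p3 p4 p5
            have e1 := mul0 p1 hs1
            have e6 := mul0 p6 hs6
            funext jj
            fin_cases jj <;>
                (simp (config := { decide := true }) [Finset.sum_apply, Pi.smul_apply,
                  smul_eq_mul, Fin.sum_univ_four, vvn]; try linarith)
          · rw [max_eq_left hm] at p2
            rw [min_eq_right hm] at p3 p4 p5
            have e1 := mul0 p1 hs1
            have e6 := mul0 p6 hs6
            funext jj
            fin_cases jj <;>
                (simp (config := { decide := true }) [Finset.sum_apply, Pi.smul_apply,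
                  smul_eq_mul, Fin.sum_univ_four, vvn]; try linarith)
        omega
      · rcases (hpos' 2).lt_or_eq with hs2 | hz2
        · rcases (hpos' 3).lt_or_eq with hs3 | hz3
          · exfalso
            have hle : Module.finrank ℝ (Submodule.span ℝ F) ≤ 4 := by
              apply span_le_four (vvn [(0,0),(1,2),(1,4),(2,3),(3,5)])
              intro x hx
              obtain ⟨p0, p1, p2, p3, p4, p5, p6⟩ := key x hx
              refine ⟨fun i : Fin 4 => if i = 0 then x 0 else if i = 1 then x 2 else if i = 2 then x 3 else x 5, ?_⟩
              rcases le_total (x 3) (x 4) with hm | hm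
              · rw [max_eq_right hm] at p2
                rw [min_eq_left hm] at p3 p4 p5
                have e1 := mul0 p1 hs1
                have e2 := mul0 p2 hs2
                have e3 := mul0 p3 hs3
                funext jj
                fin_cases jj <;>
                    (simp (config := { decide := true }) [Finset.sum_apply, Pi.smul_apply,
                      smul_eq_mul, Fin.sum_univ_four, vvn]; try linarith)
              · rw [max_eq_left hm] at p2
                rw [min_eq_right hm] at p3 p4 p5
                have e1 := mul0 p1 hs1
                have e2 := mul0 p2 hs2
                have e3 := mul0 p3 hs3
                funext jj
                fin_cases jj <;>
                    (simp (config := { decide := true }) [Finset.sum_apply, Pi.smul_apply,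
                      smul_eq_mul, Fin.sum_univ_four, vvn]; try linarith)
            omega
          · rcases (hpos' 4).lt_or_eq with hs4 | hz4
            · exfalso
              have hle : Module.finrank ℝ (Submodule.span ℝ F) ≤ 4 := by
                apply span_le_four (vvn [(0,0),(1,2),(1,3),(2,4),(3,5)])
                intro x hx
                obtain ⟨p0, p1, p2, p3, p4, p5, p6⟩ := key x hx
                refine ⟨fun i : Fin 4 => if i = 0 then x 0 else if i = 1 then x 2 else if i = 2 then x 4 else x 5, ?_⟩
                rcases le_total (x 3) (x 4) with hm | hm
                · rw [max_eq_right hm] at p2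
                  rw [min_eq_left hm] at p3 p4 p5
                  have e1 := mul0 p1 hs1
                  have e2 := mul0 p2 hs2
                  have e4 := mul0 p4 hs4
                  funext jj
                  fin_cases jj <;>
                      (simp (config := { decide := true }) [Finset.sum_apply, Pi.smul_apply,
                        smul_eq_mul, Fin.sum_univ_four, vvn]; try linarith)
                · rw [max_eq_left hm] at p2
                  rw [min_eq_right hm] at p3 p4 p5
                  have e1 := mul0 p1 hs1
                  have e2 := mul0 p2 hs2
                  have e4 := mul0 p4 hs4
                  funext jj
                  fin_cases jj <;>
                      (simp (config := { decide := true }) [Finset.sum_apply, Pi.smul_apply,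
                        smul_eq_mul, Fin.sum_univ_four, vvn]; try linarith)
              omega
            · exfalso
              linarith [hR, hpos' 5]
        · rcases (hpos' 3).lt_or_eq with hs3 | hz3
          · rcases (hpos' 4).lt_or_eq with hs4 | hz4
            · exfalso
              have hle : Module.finrank ℝ (Submodule.span ℝ F) ≤ 4 := by
                apply span_le_four (vvn [(0,0),(1,2),(2,3),(2,4),(2,5)])
                intro x hx
                obtain ⟨p0, p1, p2, p3, p4, p5, p6⟩ := key x hx
                have hs5 : 0 < f (rr 5) := by linarith [hR]
                refine ⟨fun i : Fin 4 => if i = 0 then x 0 else if i = 1 then x 2 else if i = 2 then x 3 else (0:ℝ), ?_⟩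
                rcases le_total (x 3) (x 4) with hm | hm
                · rw [max_eq_right hm] at p2
                  rw [min_eq_left hm] at p3 p4 p5
                  have e1 := mul0 p1 hs1
                  have e3 := mul0 p3 hs3
                  have e4 := mul0 p4 hs4
                  have e5 := mul0 p5 hs5
                  funext jj
                  fin_cases jj <;>
                      (simp (config := { decide := true }) [Finset.sum_apply, Pi.smul_apply,
                        smul_eq_mul, Fin.sum_univ_four, vvn]; try linarith)
                · rw [max_eq_left hm] at p2
                  rw [min_eq_right hm] at p3 p4 p5
                  have e1 := mul0 p1 hs1
                  have e3 := mul0 p3 hs3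
                  have e4 := mul0 p4 hs4
                  have e5 := mul0 p5 hs5
                  funext jj
                  fin_cases jj <;>
                      (simp (config := { decide := true }) [Finset.sum_apply, Pi.smul_apply,
                        smul_eq_mul, Fin.sum_univ_four, vvn]; try linarith)
              omega
            · exfalso
              have hle : Module.finrank ℝ (Submodule.span ℝ F) ≤ 4 := by
                apply span_le_four (vvn [(0,0),(1,2),(2,3),(2,5),(3,4)])
                intro x hx
                obtain ⟨p0, p1, p2, p3, p4, p5, p6⟩ := key x hx
                have hs5 : 0 < f (rr 5) := by linarith [hR]
                refine ⟨fun i : Fin 4 => if i = 0 then x 0 else if i = 1 then x 2 else if i = 2 then x 3 else x 4, ?_⟩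
                rcases le_total (x 3) (x 4) with hm | hm
                · rw [max_eq_right hm] at p2
                  rw [min_eq_left hm] at p3 p4 p5
                  have e1 := mul0 p1 hs1
                  have e3 := mul0 p3 hs3
                  have e5 := mul0 p5 hs5
                  funext jj
                  fin_cases jj <;>
                      (simp (config := { decide := true }) [Finset.sum_apply, Pi.smul_apply,
                        smul_eq_mul, Fin.sum_univ_four, vvn]; try linarith)
                · rw [max_eq_left hm] at p2
                  rw [min_eq_right hm] at p3 p4 p5
                  have e1 := mul0 p1 hs1
                  have e3 := mul0 p3 hs3
                  have e5 := mul0 p5 hs5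
                  funext jj
                  fin_cases jj <;>
                      (simp (config := { decide := true }) [Finset.sum_apply, Pi.smul_apply,
                        smul_eq_mul, Fin.sum_univ_four, vvn]; try linarith)
              omega
          · rcases (hpos' 4).lt_or_eq with hs4 | hz4
            · exfalso
              have hle : Module.finrank ℝ (Submodule.span ℝ F) ≤ 4 := by
                apply span_le_four (vvn [(0,0),(1,2),(2,3),(3,4),(3,5)])
                intro x hx
                obtain ⟨p0, p1, p2, p3, p4, p5, p6⟩ := key x hx
                have hs5 : 0 < f (rr 5) := by linarith [hR]
                refine ⟨fun i : Fin 4 => if i = 0 then x 0 else if i = 1 then x 2 else if i = 2 then x 3 else x 4, ?_⟩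
                rcases le_total (x 3) (x 4) with hm | hm
                · rw [max_eq_right hm] at p2
                  rw [min_eq_left hm] at p3 p4 p5
                  have e1 := mul0 p1 hs1
                  have e4 := mul0 p4 hs4
                  have e5 := mul0 p5 hs5
                  funext jj
                  fin_cases jj <;>
                      (simp (config := { decide := true }) [Finset.sum_apply, Pi.smul_apply,
                        smul_eq_mul, Fin.sum_univ_four, vvn]; try linarith)
                · rw [max_eq_left hm] at p2
                  rw [min_eq_right hm] at p3 p4 p5
                  have e1 := mul0 p1 hs1
                  have e4 := mul0 p4 hs4
                  have e5 := mul0 p5 hs5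
                  funext jj
                  fin_cases jj <;>
                      (simp (config := { decide := true }) [Finset.sum_apply, Pi.smul_apply,
                        smul_eq_mul, Fin.sum_univ_four, vvn]; try linarith)
              omega
            · have hFB : F = FB 4 := by
                refine hFeq.trans (conclude_eq (c := f (rr 1)) hs1.ne' 4 ?_)
                intro j
                rw [fbvals4]
                fin_cases j <;> (simp (config := { decide := true }) [tval]; try linarith [hR])
              exact Or.inr (Or.inr (Or.inr (Or.inr (Or.inl (hFB)))))
    · rcases (hpos' 6).lt_or_eq with hs6 | hz6
      · rcases (hpos' 2).lt_or_eq with hs2 | hz2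
        · rcases (hpos' 3).lt_or_eq with hs3 | hz3
          · exfalso
            have hle : Module.finrank ℝ (Submodule.span ℝ F) ≤ 4 := by
              apply span_le_four (vvn [(0,0),(1,1),(2,2),(2,4),(3,3)])
              intro x hx
              obtain ⟨p0, p1, p2, p3, p4, p5, p6⟩ := key x hx
              refine ⟨fun i : Fin 4 => if i = 0 then x 0 else if i = 1 then x 1 else if i = 2 then x 2 else x 3, ?_⟩
              rcases le_total (x 3) (x 4) with hm | hm
              · rw [max_eq_right hm] at p2
                rw [min_eq_left hm] at p3 p4 p5
                have e2 := mul0 p2 hs2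
                have e3 := mul0 p3 hs3
                have e6 := mul0 p6 hs6
                funext jj
                fin_cases jj <;>
                    (simp (config := { decide := true }) [Finset.sum_apply, Pi.smul_apply,
                      smul_eq_mul, Fin.sum_univ_four, vvn]; try linarith)
              · rw [max_eq_left hm] at p2
                rw [min_eq_right hm] at p3 p4 p5
                have e2 := mul0 p2 hs2
                have e3 := mul0 p3 hs3
                have e6 := mul0 p6 hs6
                funext jj
                fin_cases jj <;>
                    (simp (config := { decide := true }) [Finset.sum_apply, Pi.smul_apply,
                      smul_eq_mul, Fin.sum_univ_four, vvn]; try linarith)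
            omega
          · rcases (hpos' 4).lt_or_eq with hs4 | hz4
            · exfalso
              have hle : Module.finrank ℝ (Submodule.span ℝ F) ≤ 4 := by
                apply span_le_four (vvn [(0,0),(1,1),(2,2),(2,3),(3,4)])
                intro x hx
                obtain ⟨p0, p1, p2, p3, p4, p5, p6⟩ := key x hx
                refine ⟨fun i : Fin 4 => if i = 0 then x 0 else if i = 1 then x 1 else if i = 2 then x 2 else x 4, ?_⟩
                rcases le_total (x 3) (x 4) with hm | hm
                · rw [max_eq_right hm] at p2
                  rw [min_eq_left hm] at p3 p4 p5
                  have e2 := mul0 p2 hs2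
                  have e4 := mul0 p4 hs4
                  have e6 := mul0 p6 hs6
                  funext jj
                  fin_cases jj <;>
                      (simp (config := { decide := true }) [Finset.sum_apply, Pi.smul_apply,
                        smul_eq_mul, Fin.sum_univ_four, vvn]; try linarith)
                · rw [max_eq_left hm] at p2
                  rw [min_eq_right hm] at p3 p4 p5
                  have e2 := mul0 p2 hs2
                  have e4 := mul0 p4 hs4
                  have e6 := mul0 p6 hs6
                  funext jj
                  fin_cases jj <;>
                      (simp (config := { decide := true }) [Finset.sum_apply, Pi.smul_apply,
                        smul_eq_mul, Fin.sum_univ_four, vvn]; try linarith)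
              omega
            · exfalso
              linarith [hR, hpos' 5]
        · rcases (hpos' 3).lt_or_eq with hs3 | hz3
          · rcases (hpos' 4).lt_or_eq with hs4 | hz4
            · exfalso
              have hle : Module.finrank ℝ (Submodule.span ℝ F) ≤ 4 := by
                apply span_le_four (vvn [(0,0),(1,1),(2,2)])
                intro x hx
                obtain ⟨p0, p1, p2, p3, p4, p5, p6⟩ := key x hx
                have hs5 : 0 < f (rr 5) := by linarith [hR]
                refine ⟨fun i : Fin 4 => if i = 0 then x 0 else if i = 1 then x 1 else if i = 2 then x 2 else (0:ℝ), ?_⟩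
                rcases le_total (x 3) (x 4) with hm | hm
                · rw [max_eq_right hm] at p2
                  rw [min_eq_left hm] at p3 p4 p5
                  have e3 := mul0 p3 hs3
                  have e4 := mul0 p4 hs4
                  have e5 := mul0 p5 hs5
                  have e6 := mul0 p6 hs6
                  funext jj
                  fin_cases jj <;>
                      (simp (config := { decide := true }) [Finset.sum_apply, Pi.smul_apply,
                        smul_eq_mul, Fin.sum_univ_four, vvn]; try linarith)
                · rw [max_eq_left hm] at p2
                  rw [min_eq_right hm] at p3 p4 p5
                  have e3 := mul0 p3 hs3
                  have e4 := mul0 p4 hs4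
                  have e5 := mul0 p5 hs5
                  have e6 := mul0 p6 hs6
                  funext jj
                  fin_cases jj <;>
                      (simp (config := { decide := true }) [Finset.sum_apply, Pi.smul_apply,
                        smul_eq_mul, Fin.sum_univ_four, vvn]; try linarith)
              omega
            · exfalso
              have hle : Module.finrank ℝ (Submodule.span ℝ F) ≤ 4 := by
                apply span_le_four (vvn [(0,0),(1,1),(2,2),(3,4)])
                intro x hx
                obtain ⟨p0, p1, p2, p3, p4, p5, p6⟩ := key x hx
                have hs5 : 0 < f (rr 5) := by linarith [hR]
                refine ⟨fun i : Fin 4 => if i = 0 then x 0 else if i = 1 then x 1 else if i = 2 then x 2 else x 4, ?_⟩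
                rcases le_total (x 3) (x 4) with hm | hm
                · rw [max_eq_right hm] at p2
                  rw [min_eq_left hm] at p3 p4 p5
                  have e3 := mul0 p3 hs3
                  have e5 := mul0 p5 hs5
                  have e6 := mul0 p6 hs6
                  funext jj
                  fin_cases jj <;>
                      (simp (config := { decide := true }) [Finset.sum_apply, Pi.smul_apply,
                        smul_eq_mul, Fin.sum_univ_four, vvn]; try linarith)
                · rw [max_eq_left hm] at p2
                  rw [min_eq_right hm] at p3 p4 p5
                  have e3 := mul0 p3 hs3
                  have e5 := mul0 p5 hs5
                  have e6 := mul0 p6 hs6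
                  funext jj
                  fin_cases jj <;>
                      (simp (config := { decide := true }) [Finset.sum_apply, Pi.smul_apply,
                        smul_eq_mul, Fin.sum_univ_four, vvn]; try linarith)
              omega
          · rcases (hpos' 4).lt_or_eq with hs4 | hz4
            · exfalso
              have hle : Module.finrank ℝ (Submodule.span ℝ F) ≤ 4 := by
                apply span_le_four (vvn [(0,0),(1,1),(2,2),(3,3)])
                intro x hx
                obtain ⟨p0, p1, p2, p3, p4, p5, p6⟩ := key x hx
                have hs5 : 0 < f (rr 5) := by linarith [hR]
                refine ⟨fun i : Fin 4 => if i = 0 then x 0 else if i = 1 then x 1 else if i = 2 then x 2 else x 3, ?_⟩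
                rcases le_total (x 3) (x 4) with hm | hm
                · rw [max_eq_right hm] at p2
                  rw [min_eq_left hm] at p3 p4 p5
                  have e4 := mul0 p4 hs4
                  have e5 := mul0 p5 hs5
                  have e6 := mul0 p6 hs6
                  funext jj
                  fin_cases jj <;>
                      (simp (config := { decide := true }) [Finset.sum_apply, Pi.smul_apply,
                        smul_eq_mul, Fin.sum_univ_four, vvn]; try linarith)
                · rw [max_eq_left hm] at p2
                  rw [min_eq_right hm] at p3 p4 p5
                  have e4 := mul0 p4 hs4
                  have e5 := mul0 p5 hs5
                  have e6 := mul0 p6 hs6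
                  funext jj
                  fin_cases jj <;>
                      (simp (config := { decide := true }) [Finset.sum_apply, Pi.smul_apply,
                        smul_eq_mul, Fin.sum_univ_four, vvn]; try linarith)
              omega
            · have hFB : F = FB 3 := by
                refine hFeq.trans (conclude_eq (c := f (rr 6)) hs6.ne' 3 ?_)
                intro j
                rw [fbvals3]
                fin_cases j <;> (simp (config := { decide := true }) [tval]; try linarith [hR])
              exact Or.inr (Or.inr (Or.inr (Or.inl (hFB))))
      · rcases (hpos' 2).lt_or_eq with hs2 | hz2
        · rcases (hpos' 3).lt_or_eq with hs3 | hz3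
          · rcases (hpos' 4).lt_or_eq with hs4 | hz4
            · exfalso
              have hle : Module.finrank ℝ (Submodule.span ℝ F) ≤ 4 := by
                apply span_le_four (vvn [(0,0),(1,1),(2,2),(2,3),(2,4),(3,5)])
                intro x hx
                obtain ⟨p0, p1, p2, p3, p4, p5, p6⟩ := key x hx
                refine ⟨fun i : Fin 4 => if i = 0 then x 0 else if i = 1 then x 1 else if i = 2 then x 2 else x 5, ?_⟩
                rcases le_total (x 3) (x 4) with hm | hm
                · rw [max_eq_right hm] at p2
                  rw [min_eq_left hm] at p3 p4 p5
                  have e2 := mul0 p2 hs2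
                  have e3 := mul0 p3 hs3
                  have e4 := mul0 p4 hs4
                  funext jj
                  fin_cases jj <;>
                      (simp (config := { decide := true }) [Finset.sum_apply, Pi.smul_apply,
                        smul_eq_mul, Fin.sum_univ_four, vvn]; try linarith)
                · rw [max_eq_left hm] at p2
                  rw [min_eq_right hm] at p3 p4 p5
                  have e2 := mul0 p2 hs2
                  have e3 := mul0 p3 hs3
                  have e4 := mul0 p4 hs4
                  funext jj
                  fin_cases jj <;>
                      (simp (config := { decide := true }) [Finset.sum_apply, Pi.smul_apply,
                        smul_eq_mul, Fin.sum_univ_four, vvn]; try linarith)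
              omega
            · rcases (hpos' 5).lt_or_eq with hs5 | hz5
              · exfalso
                have hle : Module.finrank ℝ (Submodule.span ℝ F) ≤ 4 := by
                  apply span_le_four (vvn [(0,0),(1,1),(2,2),(2,4),(3,3),(3,5)])
                  intro x hx
                  obtain ⟨p0, p1, p2, p3, p4, p5, p6⟩ := key x hx
                  refine ⟨fun i : Fin 4 => if i = 0 then x 0 else if i = 1 then x 1 else if i = 2 then x 2 else x 3, ?_⟩
                  rcases le_total (x 3) (x 4) with hm | hm
                  · rw [max_eq_right hm] at p2
                    rw [min_eq_left hm] at p3 p4 p5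
                    have e2 := mul0 p2 hs2
                    have e3 := mul0 p3 hs3
                    have e5 := mul0 p5 hs5
                    funext jj
                    fin_cases jj <;>
                        (simp (config := { decide := true }) [Finset.sum_apply, Pi.smul_apply,
                          smul_eq_mul, Fin.sum_univ_four, vvn]; try linarith)
                  · rw [max_eq_left hm] at p2
                    rw [min_eq_right hm] at p3 p4 p5
                    have e2 := mul0 p2 hs2
                    have e3 := mul0 p3 hs3
                    have e5 := mul0 p5 hs5
                    funext jj
                    fin_cases jj <;>
                        (simp (config := { decide := true }) [Finset.sum_apply, Pi.smul_apply,
                          smul_eq_mul, Fin.sum_univ_four, vvn]; try linarith)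
                omega
              · have hFB : F = FB 5 := by
                  refine hFeq.trans (conclude_eq (c := f (rr 2)) hs2.ne' 5 ?_)
                  intro j
                  rw [fbvals5]
                  fin_cases j <;> (simp (config := { decide := true }) [tval]; try linarith [hR])
                exact Or.inr (Or.inr (Or.inr (Or.inr (Or.inr (Or.inl (hFB))))))
          · rcases (hpos' 4).lt_or_eq with hs4 | hz4
            · rcases (hpos' 5).lt_or_eq with hs5 | hz5
              · exfalso
                have hle : Module.finrank ℝ (Submodule.span ℝ F) ≤ 4 := by
                  apply span_le_four (vvn [(0,0),(1,1),(2,2),(2,3),(3,4),(3,5)])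
                  intro x hx
                  obtain ⟨p0, p1, p2, p3, p4, p5, p6⟩ := key x hx
                  refine ⟨fun i : Fin 4 => if i = 0 then x 0 else if i = 1 then x 1 else if i = 2 then x 2 else x 4, ?_⟩
                  rcases le_total (x 3) (x 4) with hm | hm
                  · rw [max_eq_right hm] at p2
                    rw [min_eq_left hm] at p3 p4 p5
                    have e2 := mul0 p2 hs2
                    have e4 := mul0 p4 hs4
                    have e5 := mul0 p5 hs5
                    funext jj
                    fin_cases jj <;>
                        (simp (config := { decide := true }) [Finset.sum_apply, Pi.smul_apply,
                          smul_eq_mul, Fin.sum_univ_four, vvn]; try linarith)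
                  · rw [max_eq_left hm] at p2
                    rw [min_eq_right hm] at p3 p4 p5
                    have e2 := mul0 p2 hs2
                    have e4 := mul0 p4 hs4
                    have e5 := mul0 p5 hs5
                    funext jj
                    fin_cases jj <;>
                        (simp (config := { decide := true }) [Finset.sum_apply, Pi.smul_apply,
                          smul_eq_mul, Fin.sum_univ_four, vvn]; try linarith)
                omega
              · have hFB : F = FB 1 := by
                  refine hFeq.trans (conclude_eq (c := f (rr 2)) hs2.ne' 1 ?_)
                  intro j
                  rw [fbvals1]
                  fin_cases j <;> (simp (config := { decide := true }) [tval]; try linarith [hR])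
                exact Or.inr (Or.inl (hFB))
            · exfalso
              linarith [hR, hpos' 5]
        · rcases (hpos' 3).lt_or_eq with hs3 | hz3
          · rcases (hpos' 4).lt_or_eq with hs4 | hz4
            · exfalso
              have hle : Module.finrank ℝ (Submodule.span ℝ F) ≤ 4 := by
                apply span_le_four (vvn [(0,0),(1,1),(2,2),(3,3),(3,4),(3,5)])
                intro x hx
                obtain ⟨p0, p1, p2, p3, p4, p5, p6⟩ := key x hx
                have hs5 : 0 < f (rr 5) := by linarith [hR]
                refine ⟨fun i : Fin 4 => if i = 0 then x 0 else if i = 1 then x 1 else if i = 2 then x 2 else x 3, ?_⟩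
                rcases le_total (x 3) (x 4) with hm | hm
                · rw [max_eq_right hm] at p2
                  rw [min_eq_left hm] at p3 p4 p5
                  have e3 := mul0 p3 hs3
                  have e4 := mul0 p4 hs4
                  have e5 := mul0 p5 hs5
                  funext jj
                  fin_cases jj <;>
                      (simp (config := { decide := true }) [Finset.sum_apply, Pi.smul_apply,
                        smul_eq_mul, Fin.sum_univ_four, vvn]; try linarith)
                · rw [max_eq_left hm] at p2
                  rw [min_eq_right hm] at p3 p4 p5
                  have e3 := mul0 p3 hs3
                  have e4 := mul0 p4 hs4
                  have e5 := mul0 p5 hs5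
                  funext jj
                  fin_cases jj <;>
                      (simp (config := { decide := true }) [Finset.sum_apply, Pi.smul_apply,
                        smul_eq_mul, Fin.sum_univ_four, vvn]; try linarith)
              omega
            · have hFB : F = FB 6 := by
                refine hFeq.trans (conclude_eq (c := f (rr 3)) hs3.ne' 6 ?_)
                intro j
                rw [fbvals6]
                fin_cases j <;> (simp (config := { decide := true }) [tval]; try linarith [hR])
              exact Or.inr (Or.inr (Or.inr (Or.inr (Or.inr (Or.inr (hFB))))))
          · rcases (hpos' 4).lt_or_eq with hs4 | hz4
            · have hFB : F = FB 2 := by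
                refine hFeq.trans (conclude_eq (c := f (rr 4)) hs4.ne' 2 ?_)
                intro j
                rw [fbvals2]
                fin_cases j <;> (simp (config := { decide := true }) [tval]; try linarith [hR])
              exact Or.inr (Or.inr (Or.inl (hFB)))
            · exfalso
              have z5 : f (rr 5) = 0 := by linarith [hR]
              have hfx : ∀ y, f y = 0 := by
                intro y
                rw [frepr f y, ← hz0, ← hz1, ← hz2, ← hz3, ← hz4, ← hz6, z5]
                ring
              have hCF : CC ⊆ F := by
                intro y hy
                rw [hFeq]
                exact ⟨hy, hfx y⟩
              have := span_ge_six hCF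
              omega
lemma FB_inj : Function.Injective FB := by
  intro a b h
  fin_cases a <;> fin_cases b <;> first
    | rfl
    | exact absurd h neq_0_1
    | exact absurd h.symm neq_0_1
    | exact absurd h neq_0_2
    | exact absurd h.symm neq_0_2
    | exact absurd h neq_0_3
    | exact absurd h.symm neq_0_3
    | exact absurd h neq_0_4
    | exact absurd h.symm neq_0_4
    | exact absurd h neq_0_5
    | exact absurd h.symm neq_0_5
    | exact absurd h neq_0_6
    | exact absurd h.symm neq_0_6
    | exact absurd h neq_1_2
    | exact absurd h.symm neq_1_2
    | exact absurd h neq_1_3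
    | exact absurd h.symm neq_1_3
    | exact absurd h neq_1_4
    | exact absurd h.symm neq_1_4
    | exact absurd h neq_1_5
    | exact absurd h.symm neq_1_5
    | exact absurd h neq_1_6
    | exact absurd h.symm neq_1_6
    | exact absurd h neq_2_3
    | exact absurd h.symm neq_2_3
    | exact absurd h neq_2_4
    | exact absurd h.symm neq_2_4
    | exact absurd h neq_2_5
    | exact absurd h.symm neq_2_5
    | exact absurd h neq_2_6
    | exact absurd h.symm neq_2_6
    | exact absurd h neq_3_4
    | exact absurd h.symm neq_3_4
    | exact absurd h neq_3_5
    | exact absurd h.symm neq_3_5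
    | exact absurd h neq_3_6
    | exact absurd h.symm neq_3_6
    | exact absurd h neq_4_5
    | exact absurd h.symm neq_4_5
    | exact absurd h neq_4_6
    | exact absurd h.symm neq_4_6
    | exact absurd h neq_5_6
    | exact absurd h.symm neq_5_6

lemma facetFB : ∀ k, IsFacetOf CC (FB k) := by
  intro k
  fin_cases k
  · exact facet0
  · exact facet1
  · exact facet2
  · exact facet3
  · exact facet4
  · exact facet5
  · exact facet6

lemma facet_set_eq : {F | IsFacetOf CC F} = {FB 0, FB 1, FB 2, FB 3, FB 4, FB 5, FB 6} := by
  ext G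
  constructor
  · intro hG
    rcases classify hG with h|h|h|h|h|h|h <;> simp [h]
  · intro hG
    simp only [Set.mem_insert_iff, Set.mem_singleton_iff] at hG
    rcases hG with h|h|h|h|h|h|h <;> rw [h] <;> exact facetFB _

lemma ncard_seven : {F | IsFacetOf CC F}.ncard = 7 := by
  rw [facet_set_eq]
  have f6 : ({FB 6} : Set (Set (Fin 6 → ℝ))).Finite := Set.finite_singleton _
  have f5 := f6.insert (FB 5)
  have f4 := f5.insert (FB 4)
  have f3 := f4.insert (FB 3)
  have f2 := f3.insert (FB 2)
  have f1 := f2.insert (FB 1)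
  rw [Set.ncard_insert_of_notMem (by
        simp only [Set.mem_insert_iff, Set.mem_singleton_iff]
        push_neg
        exact ⟨neq_0_1, neq_0_2, neq_0_3, neq_0_4, neq_0_5, neq_0_6⟩) f1,
      Set.ncard_insert_of_notMem (by
        simp only [Set.mem_insert_iff, Set.mem_singleton_iff]
        push_neg
        exact ⟨neq_1_2, neq_1_3, neq_1_4, neq_1_5, neq_1_6⟩) f2,
      Set.ncard_insert_of_notMem (by
        simp only [Set.mem_insert_iff, Set.mem_singleton_iff]
        push_neg
        exact ⟨neq_2_3, neq_2_4, neq_2_5, neq_2_6⟩) f3,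
      Set.ncard_insert_of_notMem (by
        simp only [Set.mem_insert_iff, Set.mem_singleton_iff]
        push_neg
        exact ⟨neq_3_4, neq_3_5, neq_3_6⟩) f4,
      Set.ncard_insert_of_notMem (by
        simp only [Set.mem_insert_iff, Set.mem_singleton_iff]
        push_neg
        exact ⟨neq_4_5, neq_4_6⟩) f5,
      Set.ncard_insert_of_notMem (by
        simp only [Set.mem_singleton_iff]
        exact neq_5_6) f6,
      Set.ncard_singleton]

set_option maxHeartbeats 1000000 in
lemma not_simplicial : ¬ IsSimplicialCone CC := by
  classical
  rintro ⟨v, hv, hCv⟩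
  have hvC : ∀ i, v i ∈ CC := by
    intro i
    rw [hCv]
    refine ⟨fun j => if j = i then 1 else 0, fun j => by positivity, ?_⟩
    rw [show (∑ j, (if j = i then (1:ℝ) else 0) • v j) = ∑ j, (if j = i then v j else 0) by
      refine Finset.sum_congr rfl fun j _ => ?_
      split <;> simp]
    rw [Finset.sum_ite_eq' Finset.univ i v]
    simp
  -- decomposition with vanishing coefficients
  have hdecomp : ∀ (f : (Fin 6 → ℝ) →ₗ[ℝ] ℝ) (F : Set (Fin 6 → ℝ)),
      (∀ x ∈ CC, 0 ≤ f x) → F = {x ∈ CC | f x = 0} → ∀ x ∈ F,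
      ∃ c : Fin 6 → ℝ, (∀ i, 0 ≤ c i) ∧ x = ∑ i, c i • v i ∧
        (∀ i, f (v i) ≠ 0 → c i = 0) := by
    intro f F hpos hFeq x hx
    rw [hFeq] at hx
    obtain ⟨hxC, hxf⟩ := hx
    have hxC' := hxC
    rw [hCv] at hxC'
    obtain ⟨c, hc0, hcx⟩ := hxC'
    refine ⟨c, hc0, hcx, ?_⟩
    have hsum : ∑ i, c i * f (v i) = 0 := by
      have h1 : f x = ∑ i, c i * f (v i) := by
        rw [hcx, map_sum]
        exact Finset.sum_congr rfl fun i _ => by rw [map_smul, smul_eq_mul]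
      rw [← h1, hxf]
    intro i hfi
    have hterm : ∀ j ∈ Finset.univ, 0 ≤ c j * f (v j) :=
      fun j _ => mul_nonneg (hc0 j) (hpos _ (hvC j))
    have hz := (Finset.sum_eq_zero_iff_of_nonneg hterm).mp hsum i (Finset.mem_univ i)
    rcases mul_eq_zero.mp hz with h | h
    · exact h
    · exact absurd h hfi
  -- index sets
  set I : Set (Fin 6 → ℝ) → Finset (Fin 6) :=
    fun F => Finset.univ.filter (fun i => v i ∈ F) with hI
  have card5 : ∀ F, IsFacetOf CC F → (I F).card = 5 := by
    intro F hF
    obtain ⟨f, hpos, hFeq, hdim⟩ := hF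
    have hdim5 : Module.finrank ℝ (Submodule.span ℝ F) = 5 := by
      rw [hdim]
    have hge : 5 ≤ (I F).card := by
      have hsub : ∀ x ∈ F, x ∈ Submodule.span ℝ (v '' (I F : Set (Fin 6))) := by
        intro x hx
        obtain ⟨c, hc0, hcx, hcz⟩ := hdecomp f F hpos hFeq x hx
        rw [hcx]
        apply Submodule.sum_mem
        intro i _
        by_cases hi : v i ∈ F
        · refine Submodule.smul_mem _ _ (Submodule.subset_span ⟨i, ?_, rfl⟩)
          simp [hI, hi]
        · have hne : f (v i) ≠ 0 := by
            intro h0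
            exact hi (by rw [hFeq]; exact ⟨hvC i, h0⟩)
          rw [hcz i hne, zero_smul]
          exact Submodule.zero_mem _
      have h1 : Submodule.span ℝ F ≤ Submodule.span ℝ (v '' (I F : Set (Fin 6))) :=
        Submodule.span_le.2 hsub
      have hind : LinearIndependent ℝ (fun i : ((I F : Set (Fin 6))) => v i) :=
        hv.comp _ Subtype.val_injective
      have h2 := finrank_span_eq_card hind
      have h3 : Set.range (fun i : ((I F : Set (Fin 6))) => v i) = v '' (I F : Set (Fin 6)) := by
        rw [show (fun i : ((I F : Set (Fin 6))) => v i) = v ∘ (Subtype.val) from rfl,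
          Set.range_comp, Subtype.range_coe]
      rw [h3] at h2
      have h4 : Fintype.card ((I F : Set (Fin 6))) = (I F).card := Fintype.card_coe _
      calc 5 = Module.finrank ℝ (Submodule.span ℝ F) := hdim5.symm
        _ ≤ Module.finrank ℝ (Submodule.span ℝ (v '' (I F : Set (Fin 6)))) :=
            Submodule.finrank_mono h1
        _ = (I F).card := by rw [h2, h4]
    have hle6 : (I F).card ≤ 6 := by
      calc (I F).card ≤ (Finset.univ : Finset (Fin 6)).card := Finset.card_le_card
            (Finset.filter_subset _ _)
        _ = 6 := by simp
    by_contra hne5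
    have h6 : (I F).card = 6 := by omega
    have huniv : I F = Finset.univ := Finset.eq_univ_of_card _ (by simpa using h6)
    have hallF : ∀ i, v i ∈ F := by
      intro i
      have : i ∈ I F := huniv ▸ Finset.mem_univ i
      simpa [hI] using this
    have hCF : CC ⊆ F := by
      intro x hxC
      rw [hFeq]
      refine ⟨hxC, ?_⟩
      have hxC' := hxC
      rw [hCv] at hxC'
      obtain ⟨c, hc0, hcx⟩ := hxC'
      rw [hcx, map_sum]
      apply Finset.sum_eq_zero
      intro i _
      rw [map_smul, smul_eq_mul]
      have : f (v i) = 0 := by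
        have := hallF i
        rw [hFeq] at this
        exact this.2
      rw [this, mul_zero]
    have := span_ge_six hCF
    omega
  have hinj : ∀ F G, IsFacetOf CC F → IsFacetOf CC G → I F = I G → F = G := by
    have main : ∀ F G, IsFacetOf CC F → IsFacetOf CC G → I F = I G → F ⊆ G := by
      intro F G hF hG hIeq x hx
      obtain ⟨f, hposf, hFeq, _⟩ := hF
      obtain ⟨g, hposg, hGeq, _⟩ := hG
      obtain ⟨c, hc0, hcx, hcz⟩ := hdecomp f F hposf hFeq x hx
      have hxC : x ∈ CC := by
        rw [hFeq] at hx
        exact hx.1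
      rw [hGeq]
      refine ⟨hxC, ?_⟩
      rw [hcx, map_sum]
      apply Finset.sum_eq_zero
      intro i _
      rw [map_smul, smul_eq_mul]
      by_cases hfi : f (v i) = 0
      · have hiF : v i ∈ F := by
          rw [hFeq]
          exact ⟨hvC i, hfi⟩
        have hiI : i ∈ I F := by simp [hI, hiF]
        rw [hIeq] at hiI
        have hiG : v i ∈ G := by simpa [hI] using hiI
        rw [hGeq] at hiG
        rw [hiG.2, mul_zero]
      · rw [hcz i hfi, zero_mul]
    intro F G hF hG hIeq
    exact le_antisymm (main F G hF hG hIeq) (main G F hG hF hIeq.symm)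
  -- pigeonhole
  have hcard : (Finset.univ : Finset (Fin 7)).card ≤
      ((Finset.univ : Finset (Fin 6)).powersetCard 5).card := by
    apply Finset.card_le_card_of_injOn (fun k => I (FB k))
    · intro k _
      rw [Finset.mem_coe, Finset.mem_powersetCard]
      exact ⟨Finset.subset_univ _, card5 _ (facetFB k)⟩
    · intro a _ b _ hab
      exact FB_inj (hinj _ _ (facetFB a) (facetFB b) hab)
  rw [Finset.card_powersetCard] at hcard
  simp at hcard

/-- The string cone of type `A₃` for the reduced word `(1,3,2,1,3,2)`, cut out by the seven
inequalities `a₁ ≥ 0`, `a₃ - a₄ ≥ 0`, `a₅ - a₆ ≥ 0`, `a₆ ≥ 0`, `a₂ ≥ 0`, `a₃ - a₅ ≥ 0`,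
`a₄ - a₆ ≥ 0`, has exactly `7` facets; in particular none of the seven inequalities is
redundant and the cone is not simplicial. -/
theorem string_cone_A3_132132_seven_facets :
    letI C : Set (Fin 6 → ℝ) :=
      {a | 0 ≤ a 0 ∧ 0 ≤ a 2 - a 3 ∧ 0 ≤ a 4 - a 5 ∧ 0 ≤ a 5 ∧ 0 ≤ a 1 ∧
        0 ≤ a 2 - a 4 ∧ 0 ≤ a 3 - a 5}
    {F | IsFacetOf C F}.ncard = 7 ∧ ¬ IsSimplicialCone C := by
  exact ⟨ncard_seven, not_simplicial⟩
end
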